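/- arXiv:1311.5549 — 6 statements merged into one kernel-verified Lean document; each statement's English description precedes it below -/
import Mathlib

section
/- Consider a reduced q-algebraic equation P(z) + Σ_{A∈Q} r_A A f(z) = 0 satisfying the existence condition. Then the equation has a formal power series solution f ∈ ℂ[[z]]; the constant coefficient of any solution equals f₀ = −P₀ / (Σ_{A∈Q₀} r_A), and any two formal power series solutions with the same constant coefficient coincide, so the solution is unique. -/
open scoped Classical
open PowerSeries Filter Topology

noncomputable section

structure QFactor where
  a : ℕ
  alpha : List ℤ
  ne : alpha ≠ []
  sorted : alpha.Pairwise (· ≤ ·)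

namespace QFactor

/-- the first exponent α₁ of a q-factor -/
def alphaFirst (A : QFactor) : ℤ := A.alpha.head A.ne

/-- the last exponent α_ℓ of a q-factor -/
def alphaLast (A : QFactor) : ℤ := A.alpha.getLast A.ne

/-- the scope s(A) : the number of maximal exponents -/
def scope (A : QFactor) : ℕ := A.alpha.count A.alphaLast

/-- the action A f (z) = z^a f(q^{α₁} z) ⋯ f(q^{α_ℓ} z) -/
def act (q : ℂ) (A : QFactor) (f : PowerSeries ℂ) : PowerSeries ℂ :=
  (PowerSeries.X : PowerSeries ℂ) ^ A.a *
    (A.alpha.map fun j => PowerSeries.rescale (q ^ j) f).prod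

/-- the height H(A) = α_ℓ / (2a) of a (shifting) q-factor -/
def height (A : QFactor) : ℝ := (A.alphaLast : ℝ) / (2 * A.a)

end QFactor

/-- the q-algebraic equation P(z) + ∑_{A ∈ Q} r_A A f(z) = 0 -/
def QAlgEq {N : ℕ} (q : ℂ) (Q : Fin N → QFactor) (r : Fin N → ℂ)
    (P : Polynomial ℂ) (f : PowerSeries ℂ) : Prop :=
  (P : PowerSeries ℂ) + ∑ i, PowerSeries.C (r i) * (Q i).act q f = 0

/-- a q-algebraic equation is reduced if all its nonshifting q-factors are linear -/
def Reduced {N : ℕ} (Q : Fin N → QFactor) : Prop :=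
  ∀ i, (Q i).a = 0 → (Q i).alpha.length = 1

/-- the existence condition : ∑_{A ∈ Q₀} r_A q^{α₁ n} ≠ 0 for all n ≥ 0 -/
def ExistCond {N : ℕ} (q : ℂ) (Q : Fin N → QFactor) (r : Fin N → ℂ) : Prop :=
  ∀ n : ℕ, (∑ i, if (Q i).a = 0 then r i * q ^ ((Q i).alphaFirst * n) else 0) ≠ 0

/-- the radius of convergence of ∑ f_n zⁿ -/
def seriesRadius {𝕜 : Type*} [NormedField 𝕜] (f : ℕ → 𝕜) : ENNReal :=
  ⨆ (ρ : NNReal) (_ : ∃ C : ℝ, ∀ n : ℕ, ‖f n‖ * (ρ : ℝ) ^ n ≤ C), (ρ : ENNReal)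

/-- the branch power q^x = exp (x log q), for a fixed branch L of log q -/
def cpow' (L : ℂ) (x : ℝ) : ℂ := Complex.exp (x * L)

end

noncomputable section Stmt0Aux

namespace Stmt0Aux

variable {N : ℕ}

/-- the coefficient c_n = ∑_{A∈Q₀} r_A q^{α₁ n} -/
def cc (q : ℂ) (Q : Fin N → QFactor) (r : Fin N → ℂ) (n : ℕ) : ℂ :=
  ∑ i, if (Q i).a = 0 then r i * q ^ ((Q i).alphaFirst * n) else 0

/-- the shifting part of the n-th coefficient of the equation -/
def ss (q : ℂ) (Q : Fin N → QFactor) (r : Fin N → ℂ) (n : ℕ)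
    (f : PowerSeries ℂ) : ℂ :=
  ∑ i, if (Q i).a = 0 then 0 else r i * PowerSeries.coeff n ((Q i).act q f)

lemma agree_prod (q : ℂ) (n : ℕ) (l : List ℤ) (f g : PowerSeries ℂ)
    (h : ∀ k ≤ n, coeff k f = coeff k g) :
    ∀ k ≤ n, coeff k ((l.map fun j => PowerSeries.rescale (q ^ j) f).prod)
      = coeff k ((l.map fun j => PowerSeries.rescale (q ^ j) g).prod) := by
  induction l with
  | nil => intro k _; rfl
  | cons j t ih =>
      intro k hk
      simp only [List.map_cons, List.prod_cons, coeff_mul]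
      refine Finset.sum_congr rfl fun p hp => ?_
      rw [Finset.HasAntidiagonal.mem_antidiagonal] at hp
      have h1 : p.1 ≤ n := le_trans (le_trans (Nat.le_add_right _ _) hp.le) hk
      have h2 : p.2 ≤ n := le_trans (le_trans (Nat.le_add_left _ _) hp.le) hk
      rw [coeff_rescale, coeff_rescale, h p.1 h1, ih p.2 h2]

lemma coeff_act_shift (q : ℂ) (A : QFactor) (hA : A.a ≠ 0) (f g : PowerSeries ℂ)
    (n : ℕ) (h : ∀ k < n, coeff k f = coeff k g) :
    coeff n (A.act q f) = coeff n (A.act q g) := by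
  unfold QFactor.act
  rw [coeff_X_pow_mul', coeff_X_pow_mul']
  split_ifs with hle
  · have hlt : n - A.a < n := Nat.sub_lt (lt_of_lt_of_le (Nat.pos_of_ne_zero hA) hle)
      (Nat.pos_of_ne_zero hA)
    exact agree_prod q (n - A.a) A.alpha f g
      (fun k hk => h k (lt_of_le_of_lt hk hlt)) (n - A.a) le_rfl
  · rfl

lemma coeff_act_shift_zero (q : ℂ) (A : QFactor) (hA : A.a ≠ 0) (f : PowerSeries ℂ) :
    coeff 0 (A.act q f) = 0 := by
  unfold QFactor.act
  rw [coeff_X_pow_mul', if_neg]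
  omega

lemma coeff_act_nonshift (q : ℂ) (hq : q ≠ 0) (A : QFactor) (hA : A.a = 0)
    (hl : A.alpha.length = 1) (f : PowerSeries ℂ) (n : ℕ) :
    coeff n (A.act q f) = q ^ (A.alphaFirst * n) * coeff n f := by
  obtain ⟨α, hα⟩ := List.length_eq_one_iff.mp hl
  have hfirst : A.alphaFirst = α := by simp [QFactor.alphaFirst, hα]
  unfold QFactor.act
  rw [hA, hα, pow_zero, one_mul]
  simp only [List.map_cons, List.map_nil, List.prod_cons, List.prod_nil, mul_one]
  rw [coeff_rescale, hfirst, zpow_mul, zpow_natCast]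

lemma ss_congr (q : ℂ) (Q : Fin N → QFactor) (r : Fin N → ℂ) (n : ℕ)
    (f g : PowerSeries ℂ) (h : ∀ k < n, coeff k f = coeff k g) :
    ss q Q r n f = ss q Q r n g := by
  unfold ss
  refine Finset.sum_congr rfl fun i _ => ?_
  split_ifs with ha
  · rfl
  · rw [coeff_act_shift q (Q i) ha f g n h]

lemma key (q : ℂ) (hq : q ≠ 0) (Q : Fin N → QFactor) (r : Fin N → ℂ)
    (hred : Reduced Q) (f : PowerSeries ℂ) (n : ℕ) :
    (∑ i, r i * coeff n ((Q i).act q f))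
      = cc q Q r n * coeff n f + ss q Q r n f := by
  unfold cc ss
  rw [Finset.sum_mul, ← Finset.sum_add_distrib]
  refine Finset.sum_congr rfl fun i _ => ?_
  split_ifs with ha
  · rw [add_zero, coeff_act_nonshift q hq (Q i) ha (hred i ha) f n]; ring
  · rw [zero_mul, zero_add]

lemma eqn_iff (q : ℂ) (hq : q ≠ 0) (Q : Fin N → QFactor) (r : Fin N → ℂ)
    (hred : Reduced Q) (P : Polynomial ℂ) (f : PowerSeries ℂ) :
    QAlgEq q Q r P f ↔
      ∀ n, P.coeff n + (cc q Q r n * coeff n f + ss q Q r n f) = 0 := by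
  unfold QAlgEq
  rw [PowerSeries.ext_iff]
  refine forall_congr' fun n => ?_
  rw [map_add, map_sum, map_zero]
  simp only [coeff_C_mul, Polynomial.coeff_coe]
  rw [key q hq Q r hred f n]

/-- the recursively defined solution coefficients -/
def sol (q : ℂ) (Q : Fin N → QFactor) (r : Fin N → ℂ) (P : Polynomial ℂ) :
    ℕ → ℂ
  | n =>
    -(P.coeff n + ss q Q r n
        (PowerSeries.mk fun k => if h : k < n then sol q Q r P k else 0))
      / cc q Q r n
  termination_by n => n
  decreasing_by exact h

end Stmt0Aux

end Stmt0Aux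

/-- a reduced q-algebraic equation satisfying the existence condition has a
formal power series solution; the constant coefficient of any solution equals
−P₀ / (∑_{A∈Q₀} r_A), and two solutions with the same constant coefficient coincide. -/
theorem stmt0 {N : ℕ} (q : ℂ) (hq : 1 < ‖q‖)
    (Q : Fin N → QFactor) (r : Fin N → ℂ) (hr : ∀ i, r i ≠ 0) (P : Polynomial ℂ)
    (hred : Reduced Q) (hcond : ExistCond q Q r) :
    (∃ f : PowerSeries ℂ, QAlgEq q Q r P f) ∧
    (∀ f : PowerSeries ℂ, QAlgEq q Q r P f →
      PowerSeries.coeff 0 f =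
        -P.coeff 0 / (∑ i, if (Q i).a = 0 then r i else 0)) ∧
    (∀ f g : PowerSeries ℂ, QAlgEq q Q r P f → QAlgEq q Q r P g →
      PowerSeries.coeff 0 f = PowerSeries.coeff 0 g → f = g) := by
  have hq0 : q ≠ 0 := by
    intro h; rw [h, norm_zero] at hq; linarith
  have hcc : ∀ n, Stmt0Aux.cc q Q r n ≠ 0 := hcond
  refine ⟨?_, ?_, ?_⟩
  · -- existence
    refine ⟨PowerSeries.mk (Stmt0Aux.sol q Q r P), ?_⟩
    rw [Stmt0Aux.eqn_iff q hq0 Q r hred]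
    intro n
    have hsol : PowerSeries.coeff n (PowerSeries.mk (Stmt0Aux.sol q Q r P))
        = Stmt0Aux.sol q Q r P n := PowerSeries.coeff_mk _ _
    have hss : Stmt0Aux.ss q Q r n
          (PowerSeries.mk fun k => if h : k < n then Stmt0Aux.sol q Q r P k else 0)
        = Stmt0Aux.ss q Q r n (PowerSeries.mk (Stmt0Aux.sol q Q r P)) := by
      refine Stmt0Aux.ss_congr q Q r n _ _ fun k hk => ?_
      simp [PowerSeries.coeff_mk, hk]
    have hdef : Stmt0Aux.sol q Q r P n =
        -(P.coeff n + Stmt0Aux.ss q Q r n (PowerSeries.mk (Stmt0Aux.sol q Q r P)))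
          / Stmt0Aux.cc q Q r n := by
      rw [Stmt0Aux.sol, hss]
    rw [hsol, hdef, mul_div_cancel₀ _ (hcc n)]
    ring
  · -- constant coefficient
    intro f hf
    have h0 := (Stmt0Aux.eqn_iff q hq0 Q r hred P f).mp hf 0
    have hss0 : Stmt0Aux.ss q Q r 0 f = 0 := by
      unfold Stmt0Aux.ss
      refine Finset.sum_eq_zero fun i _ => ?_
      split_ifs with ha
      · rfl
      · rw [Stmt0Aux.coeff_act_shift_zero q (Q i) ha f, mul_zero]
    have hcc0 : Stmt0Aux.cc q Q r 0 = ∑ i, if (Q i).a = 0 then r i else 0 := by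
      unfold Stmt0Aux.cc
      refine Finset.sum_congr rfl fun i _ => ?_
      split_ifs with ha
      · simp
      · rfl
    rw [hss0, add_zero] at h0
    rw [← hcc0, eq_div_iff (hcc 0)]
    linear_combination h0
  · -- uniqueness
    intro f g hf hg _
    have hf' := (Stmt0Aux.eqn_iff q hq0 Q r hred P f).mp hf
    have hg' := (Stmt0Aux.eqn_iff q hq0 Q r hred P g).mp hg
    ext n
    induction n using Nat.strong_induction_on with
    | _ n ih =>
      have hss : Stmt0Aux.ss q Q r n f = Stmt0Aux.ss q Q r n g :=
        Stmt0Aux.ss_congr q Q r n f g fun k hk => ih k hk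
      have := hf' n
      rw [← hg' n, hss] at this
      have hmul : Stmt0Aux.cc q Q r n * PowerSeries.coeff n f
          = Stmt0Aux.cc q Q r n * PowerSeries.coeff n g := by
        linear_combination this
      exact mul_left_cancel₀ (hcc n) hmul
end

section
/- Consider a reduced q-algebraic equation whose q-factors have been collected, satisfying the existence condition, and with Q₊ ≠ ∅. If α(Q₀) ≥ α(Q₊), then the unique formal power series solution f has a positive radius of convergence, i.e., limsup_{n→∞} |f_n|^{1/n} < ∞. -/
open scoped Classical
open PowerSeries Filter Topology

section Aux
open Finset

lemma basel_bound (m : ℕ) : ∑ k ∈ range (m+1), (1:ℝ)/((k:ℝ)+1)^2 ≤ 2 - 1/((m:ℝ)+1) := by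
  induction m with
  | zero => norm_num
  | succ m ih =>
    rw [Finset.sum_range_succ]
    have h1 : ((m:ℝ)+1) > 0 := by positivity
    have h2 : ((m:ℝ)+2) > 0 := by positivity
    have : (1:ℝ)/(((m+1:ℕ):ℝ)+1)^2 ≤ 1/((m:ℝ)+1) - 1/((m:ℝ)+2) := by
      push_cast
      rw [div_sub_div _ _ (ne_of_gt h1) (ne_of_gt h2)]
      rw [div_le_div_iff₀ (by positivity) (by positivity)]
      ring_nf
      nlinarith
    push_cast at this ⊢
    have hc : ((m:ℝ) + 1 + 1) = (m:ℝ) + 2 := by ring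
    rw [hc] at this ⊢
    linarith

lemma basel_bound' (m : ℕ) : ∑ k ∈ range (m+1), (1:ℝ)/((k:ℝ)+1)^2 ≤ 2 := by
  have : (0:ℝ) < 1/((m:ℝ)+1) := by positivity
  linarith [basel_bound m]

lemma conv_weight (m : ℕ) :
    ∑ k ∈ range (m+1), (1:ℝ)/(((k:ℝ)+1)^2 * (((m-k:ℕ):ℝ)+1)^2) ≤ 16/((m:ℝ)+1)^2 := by
  have key : ∀ k ∈ range (m+1), (1:ℝ)/(((k:ℝ)+1)^2 * (((m-k:ℕ):ℝ)+1)^2)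
      ≤ 4/((m:ℝ)+1)^2 * (1/((k:ℝ)+1)^2 + 1/(((m-k:ℕ):ℝ)+1)^2) := by
    intro k hk
    rw [Finset.mem_range] at hk
    have hkm : k ≤ m := Nat.lt_succ_iff.mp hk
    have hx : ((m-k:ℕ):ℝ) = (m:ℝ) - (k:ℝ) := by
      push_cast [Nat.cast_sub hkm]; ring
    set x := (k:ℝ)
    set y := ((m-k:ℕ):ℝ)
    have hxy : x + y = (m:ℝ) := by rw [hx]; ring
    have hx0 : 0 ≤ x := Nat.cast_nonneg _
    have hy0 : 0 ≤ y := Nat.cast_nonneg _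
    have h1 : (0:ℝ) < (x+1)^2 := by positivity
    have h2 : (0:ℝ) < (y+1)^2 := by positivity
    have hm : ((m:ℝ)+1)^2 ≤ 2*((x+1)^2 + (y+1)^2) := by
      rw [← hxy]; nlinarith [sq_nonneg (x-y)]
    rw [div_add_div _ _ (ne_of_gt h1) (ne_of_gt h2), div_mul_div_comm,
      div_le_div_iff₀ (by positivity) (by positivity)]
    nlinarith [mul_le_mul_of_nonneg_right hm (le_of_lt (mul_pos h1 h2)), mul_pos h1 h2]
  calc ∑ k ∈ range (m+1), (1:ℝ)/(((k:ℝ)+1)^2 * (((m-k:ℕ):ℝ)+1)^2)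
      ≤ ∑ k ∈ range (m+1), 4/((m:ℝ)+1)^2 * (1/((k:ℝ)+1)^2 + 1/(((m-k:ℕ):ℝ)+1)^2) :=
        Finset.sum_le_sum key
    _ = 4/((m:ℝ)+1)^2 * (∑ k ∈ range (m+1), (1:ℝ)/((k:ℝ)+1)^2
        + ∑ k ∈ range (m+1), (1:ℝ)/(((m-k:ℕ):ℝ)+1)^2) := by
        rw [← Finset.mul_sum, Finset.sum_add_distrib]
    _ ≤ 4/((m:ℝ)+1)^2 * (2 + 2) := by
        have h1 := basel_bound' m
        have h2 : ∑ k ∈ range (m+1), (1:ℝ)/(((m-k:ℕ):ℝ)+1)^2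
            = ∑ k ∈ range (m+1), (1:ℝ)/((k:ℝ)+1)^2 := by
          rw [← Finset.sum_range_reflect]
          apply Finset.sum_congr rfl
          intro k hk
          rw [Finset.mem_range] at hk
          have h1 : m + 1 - 1 - k = m - k := by omega
          rw [h1]
          have h2 : m - (m - k) = k := by omega
          rw [h2]
        rw [h2]
        have : (0:ℝ) ≤ 4/((m:ℝ)+1)^2 := by positivity
        nlinarith
    _ = 16/((m:ℝ)+1)^2 := by ring

lemma norm_coeff_mul_le (u v : PowerSeries ℂ) (n : ℕ) :
    ‖PowerSeries.coeff n (u * v)‖ ≤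
      ∑ k ∈ range (n+1), ‖PowerSeries.coeff k u‖ * ‖PowerSeries.coeff (n-k) v‖ := by
  rw [PowerSeries.coeff_mul, Finset.Nat.sum_antidiagonal_eq_sum_range_succ_mk]
  exact (norm_sum_le _ _).trans (Finset.sum_le_sum fun k _ => norm_mul_le _ _)

lemma conv_bound (u v : PowerSeries ℂ) (D E x : ℝ) (hD : 0 ≤ D) (hE : 0 ≤ E) (hx : 0 ≤ x)
    (m : ℕ) (hu : ∀ k ≤ m, ‖PowerSeries.coeff k u‖ ≤ D * x^k / ((k:ℝ)+1)^2)
    (hv : ∀ k ≤ m, ‖PowerSeries.coeff k v‖ ≤ E * x^k / ((k:ℝ)+1)^2) :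
    ∀ k ≤ m, ‖PowerSeries.coeff k (u * v)‖ ≤ 16 * D * E * x^k / ((k:ℝ)+1)^2 := by
  intro k hk
  calc ‖PowerSeries.coeff k (u * v)‖
      ≤ ∑ j ∈ range (k+1), ‖PowerSeries.coeff j u‖ * ‖PowerSeries.coeff (k-j) v‖ :=
        norm_coeff_mul_le u v k
    _ ≤ ∑ j ∈ range (k+1), (D * x^j / ((j:ℝ)+1)^2) * (E * x^(k-j) / (((k-j:ℕ):ℝ)+1)^2) := by
        apply Finset.sum_le_sum
        intro j hj
        rw [Finset.mem_range] at hj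
        exact mul_le_mul (hu j (by omega)) (hv (k-j) (by omega)) (norm_nonneg _)
          (by positivity)
    _ = (D * E * x^k) * ∑ j ∈ range (k+1), (1:ℝ)/(((j:ℝ)+1)^2 * (((k-j:ℕ):ℝ)+1)^2) := by
        rw [Finset.mul_sum]
        apply Finset.sum_congr rfl
        intro j hj
        rw [Finset.mem_range] at hj
        have : x^j * x^(k-j) = x^k := by
          rw [← pow_add]; congr 1; omega
        rw [div_mul_div_comm, mul_one_div]
        congr 1
        linear_combination D * E * this
    _ ≤ (D * E * x^k) * (16/((k:ℝ)+1)^2) := by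
        apply mul_le_mul_of_nonneg_left (conv_weight k) (by positivity)
    _ = 16 * D * E * x^k / ((k:ℝ)+1)^2 := by ring

lemma list_prod_bound (L : List (PowerSeries ℂ)) (hL : L ≠ []) (D x : ℝ)
    (hD : 0 ≤ D) (hx : 0 ≤ x) (m : ℕ)
    (h : ∀ u ∈ L, ∀ k ≤ m, ‖PowerSeries.coeff k u‖ ≤ D * x^k / ((k:ℝ)+1)^2) :
    ∀ k ≤ m, ‖PowerSeries.coeff k L.prod‖
      ≤ D * (16*D)^(L.length - 1) * x^k / ((k:ℝ)+1)^2 := by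
  induction L with
  | nil => exact absurd rfl hL
  | cons u L ih =>
    rcases eq_or_ne L [] with rfl | hL'
    · intro k hk
      simpa using h u (by simp) k hk
    · intro k hk
      have hprod := ih hL' (fun v hv => h v (List.mem_cons_of_mem u hv)) 
      have hu := h u List.mem_cons_self
      have hE : (0:ℝ) ≤ D * (16*D)^(L.length - 1) := by positivity
      have key := conv_bound u L.prod D (D * (16*D)^(L.length - 1)) x hD hE hx m hu hprod k hk
      rw [List.prod_cons]
      refine key.trans (le_of_eq ?_)
      have he : (u :: L).length - 1 = (L.length - 1) + 1 := by
        have := List.length_pos_iff.mpr hL'; simp; omega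
      rw [he, pow_succ]
      ring

lemma exists_pos_lb (h : ℕ → ℝ) (hpos : ∀ n, 0 < h n) (L : ℝ) (hL : 0 < L)
    (ht : Filter.Tendsto h Filter.atTop (nhds L)) : ∃ δ > 0, ∀ n, δ ≤ h n := by
  have hev : ∀ᶠ n in Filter.atTop, L/2 < h n :=
    ht.eventually (eventually_gt_nhds (by linarith))
  obtain ⟨n₀, hn₀⟩ := hev.exists_forall_of_atTop
  set F := (Finset.range (n₀+1)).image h with hF
  have hFne : F.Nonempty := Finset.Nonempty.image ⟨0, Finset.mem_range.mpr (by omega)⟩ h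
  refine ⟨min (L/2) (F.min' hFne), lt_min (by linarith) ?_, ?_⟩
  · obtain ⟨x, hx, hxe⟩ := Finset.mem_image.mp (F.min'_mem hFne)
    rw [← hxe]; exact hpos x
  · intro n
    rcases le_or_gt n₀ n with hn | hn
    · exact (min_le_left _ _).trans (hn₀ n hn).le
    · exact (min_le_right _ _).trans (F.min'_le _ (Finset.mem_image_of_mem h
        (Finset.mem_range.mpr (by omega))))

lemma QFactor.ext' : ∀ {A B : QFactor}, A.a = B.a → A.alpha = B.alpha → A = B := by
  rintro ⟨a, l, n, s⟩ ⟨a', l', n', s'⟩ h1 h2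
  simp only at h1 h2
  subst h1; subst h2; rfl

lemma sorted_le_getLast {l : List ℤ} (hl : l ≠ []) (hs : l.Pairwise (· ≤ ·)) {x : ℤ}
    (hx : x ∈ l) : x ≤ l.getLast hl := by
  induction l with
  | nil => exact absurd rfl hl
  | cons a t ih =>
    rw [List.pairwise_cons] at hs
    rcases eq_or_ne t [] with rfl | ht
    · simp at hx; simp [hx, List.getLast]
    · rw [List.getLast_cons ht]
      rcases List.mem_cons.mp hx with rfl | hxt
      · exact (hs.1 _ (List.getLast_mem ht))
      · exact ih ht hs.2 hxt

lemma alpha_eq_singleton {A : QFactor} (h : A.alpha.length = 1) :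
    A.alpha = [A.alphaFirst] := by
  obtain ⟨x, hx⟩ := List.length_eq_one_iff.mp h
  rw [hx]
  simp [QFactor.alphaFirst, hx]

lemma alphaLast_eq_alphaFirst {A : QFactor} (h : A.alpha.length = 1) :
    A.alphaLast = A.alphaFirst := by
  obtain ⟨x, hx⟩ := List.length_eq_one_iff.mp h
  have h1 : A.alphaLast ∈ A.alpha := List.getLast_mem A.ne
  have h2 : A.alphaFirst ∈ A.alpha := List.head_mem A.ne
  rw [hx] at h1 h2
  simp at h1 h2
  rw [h1, h2]

lemma act_nonshifting {A : QFactor} (q : ℂ) (f : PowerSeries ℂ) (ha : A.a = 0)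
    (hl : A.alpha.length = 1) :
    A.act q f = PowerSeries.rescale (q ^ A.alphaFirst) f := by
  rw [QFactor.act, ha, pow_zero, one_mul, alpha_eq_singleton hl]
  simp

end Aux

/-- for a reduced q-algebraic equation with collected q-factors satisfying the
existence condition, with Q₊ ≠ ∅ and α(Q₀) ≥ α(Q₊), the unique power series solution has
a positive radius of convergence. -/
theorem stmt1 {N : ℕ} (q : ℂ) (hq : 1 < ‖q‖)
    (Q : Fin N → QFactor) (r : Fin N → ℂ) (hr : ∀ i, r i ≠ 0) (P : Polynomial ℂ)
    (hred : Reduced Q) (hcol : Function.Injective Q) (hcond : ExistCond q Q r)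
    (hQplus : ∃ i, 0 < (Q i).a)
    -- α(Q₀) ≥ α(Q₊): every last exponent of a shifting q-factor is dominated by the last
    -- exponent of some nonshifting q-factor
    (hge : ∀ i, 0 < (Q i).a → ∃ j, (Q j).a = 0 ∧ (Q i).alphaLast ≤ (Q j).alphaLast)
    (f : PowerSeries ℂ) (hf : QAlgEq q Q r P f) :
    0 < seriesRadius (fun n => PowerSeries.coeff n f) := by
  classical
  have hq0 : q ≠ 0 := by
    intro h; rw [h, norm_zero] at hq; linarith
  have hq1 : (1:ℝ) < ‖q‖ := hq
  set S : Finset (Fin N) := Finset.univ.filter (fun i => (Q i).a = 0) with hS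
  set c : ℕ → ℂ := fun n => ∑ i ∈ S, r i * q ^ ((Q i).alphaFirst * n) with hc
  -- c n ≠ 0
  have hcne : ∀ n, c n ≠ 0 := by
    intro n
    have := hcond n
    rwa [← Finset.sum_filter] at this
  -- the coefficient recurrence
  have hrec : ∀ n : ℕ, c n * PowerSeries.coeff n f
      = -(P.coeff n + ∑ i ∈ Sᶜ, r i * PowerSeries.coeff n ((Q i).act q f)) := by
    intro n
    have h0 := congrArg (PowerSeries.coeff n) hf
    simp only [map_add, map_sum, map_zero, PowerSeries.coeff_C_mul,
      Polynomial.coeff_coe] at h0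
    have hcompl : Sᶜ = Finset.univ.filter (fun i => ¬ (Q i).a = 0) := by
      rw [hS, Finset.compl_filter]
    have hsplit : (∑ i, r i * PowerSeries.coeff n ((Q i).act q f))
        = (∑ i ∈ S, r i * PowerSeries.coeff n ((Q i).act q f))
          + ∑ i ∈ Sᶜ, r i * PowerSeries.coeff n ((Q i).act q f) := by
      rw [hS, hcompl]
      exact (Finset.sum_filter_add_sum_filter_not Finset.univ _ _).symm
    have hSsum : (∑ i ∈ S, r i * PowerSeries.coeff n ((Q i).act q f))
        = c n * PowerSeries.coeff n f := by
      rw [hc]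
      simp only []
      rw [Finset.sum_mul]
      apply Finset.sum_congr rfl
      intro i hi
      have ha : (Q i).a = 0 := by
        rw [hS] at hi; exact (Finset.mem_filter.mp hi).2
      rw [act_nonshifting q f ha (hred i ha), PowerSeries.coeff_rescale]
      rw [zpow_mul, zpow_natCast]
      ring
    rw [hsplit, hSsum] at h0
    linear_combination h0
  -- maximal exponent
  have hSne : S.Nonempty := by
    by_contra h
    rw [Finset.not_nonempty_iff_eq_empty] at h
    exact hcne 0 (by rw [hc]; simp [h])
  obtain ⟨i₀, hi₀S, hi₀max⟩ := S.exists_max_image (fun i => (Q i).alphaFirst) hSne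
  set β : ℤ := (Q i₀).alphaFirst with hβ
  set b : ℝ := ‖q‖ ^ β with hb
  have hbpos : 0 < b := zpow_pos (by linarith) β
  -- distinctness of exponents on S
  have hinj : ∀ i ∈ S, ∀ j ∈ S, (Q i).alphaFirst = (Q j).alphaFirst → i = j := by
    intro i hi j hj hij
    apply hcol
    apply QFactor.ext'
    · rw [hS] at hi hj
      rw [(Finset.mem_filter.mp hi).2, (Finset.mem_filter.mp hj).2]
    · rw [hS] at hi hj
      rw [alpha_eq_singleton (hred i (Finset.mem_filter.mp hi).2),
        alpha_eq_singleton (hred j (Finset.mem_filter.mp hj).2), hij]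
  -- lower bound for ‖c n‖
  obtain ⟨δ, hδpos, hδ⟩ : ∃ δ > 0, ∀ n, δ * b ^ n ≤ ‖c n‖ := by
    set d : ℕ → ℂ := fun n => r i₀ + ∑ i ∈ S.erase i₀, r i * (q ^ ((Q i).alphaFirst - β))^n
      with hd
    have hcd : ∀ n, c n = q ^ (β * n) * d n := by
      intro n
      rw [hc, hd]
      simp only []
      rw [mul_add, Finset.mul_sum]
      rw [← Finset.add_sum_erase S _ hi₀S]
      congr 1
      · rw [← hβ, mul_comm]
      · apply Finset.sum_congr rfl
        intro i hi
        rw [← mul_assoc, mul_comm (q ^ (β * (n:ℤ))) (r i), mul_assoc]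
        congr 1
        rw [← zpow_natCast (q ^ ((Q i).alphaFirst - β)) n, ← zpow_mul,
          ← zpow_add₀ hq0]
        congr 1
        ring
    have hdn : ∀ n, d n ≠ 0 := by
      intro n hn0
      exact hcne n (by rw [hcd n, hn0, mul_zero])
    have htend : Filter.Tendsto d Filter.atTop (nhds (r i₀)) := by
      rw [hd]
      have h0 : Filter.Tendsto (fun n : ℕ =>
          ∑ i ∈ S.erase i₀, r i * (q ^ ((Q i).alphaFirst - β))^n)
          Filter.atTop (nhds 0) := by
        have : (0:ℂ) = ∑ i ∈ S.erase i₀, 0 := by simp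
        rw [this]
        apply tendsto_finset_sum
        intro i hi
        have hiS : i ∈ S := Finset.mem_of_mem_erase hi
        have hne : i ≠ i₀ := Finset.ne_of_mem_erase hi
        have hlt : (Q i).alphaFirst < β := by
          rcases lt_or_eq_of_le (hi₀max i hiS) with h | h
          · exact h
          · exact absurd (hinj i hiS i₀ hi₀S (by rw [h, hβ])) hne
        have hnorm : ‖q ^ ((Q i).alphaFirst - β)‖ < 1 := by
          rw [norm_zpow]
          exact zpow_lt_one_of_neg₀ hq1 (by omega)
        have := tendsto_pow_atTop_nhds_zero_of_norm_lt_one hnorm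
        have h2 := this.const_mul (r i)
        rwa [mul_zero] at h2
      have := h0.const_add (r i₀)
      rwa [add_zero] at this
    obtain ⟨δ, hδpos, hδ⟩ := exists_pos_lb (fun n => ‖d n‖) (fun n => norm_pos_iff.mpr (hdn n))
      ‖r i₀‖ (norm_pos_iff.mpr (hr i₀)) htend.norm
    refine ⟨δ, hδpos, fun n => ?_⟩
    have hcn : ‖c n‖ = b ^ n * ‖d n‖ := by
      rw [hcd n, norm_mul, norm_zpow, hb, ← zpow_natCast (‖q‖ ^ β) n, ← zpow_mul]
    rw [hcn, mul_comm (b^n) ‖d n‖]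
    exact mul_le_mul_of_nonneg_right (hδ n) (pow_nonneg hbpos.le n)
  -- for i ∈ S, alphaFirst = alphaLast; β dominates all exponents appearing
  have hdom : ∀ i, (Q i).a ≠ 0 → ∀ j ∈ (Q i).alpha, j ≤ β := by
    intro i hi j hj
    obtain ⟨j', hj'0, hj'⟩ := hge i (Nat.pos_of_ne_zero hi)
    have h1 : j ≤ (Q i).alphaLast := sorted_le_getLast (Q i).ne (Q i).sorted hj
    have h2 : (Q j').alphaLast = (Q j').alphaFirst :=
      alphaLast_eq_alphaFirst (hred j' hj'0)
    have h3 : (Q j').alphaFirst ≤ β := hi₀max j' (by rw [hS]; simp [hj'0])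
    omega
  -- the main estimate
  set g : ℕ → ℝ := fun n => ‖PowerSeries.coeff n f‖ with hg
  obtain ⟨C, hC1, M, hM1, hbound⟩ :
      ∃ C, 1 ≤ C ∧ ∃ M, 1 ≤ M ∧ ∀ n, g n ≤ C * M ^ n / ((n:ℝ)+1)^2 := by
    have hgk : ∀ k, g k = ‖PowerSeries.coeff k f‖ := fun _ => rfl
    -- the recurrence in norm form
    have key : ∀ n, g n * (δ * b ^ n) ≤ ‖P.coeff n‖
        + ∑ i ∈ Sᶜ, ‖r i‖ * ‖PowerSeries.coeff n ((Q i).act q f)‖ := by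
      intro n
      have h1 : ‖c n * PowerSeries.coeff n f‖ ≤ ‖P.coeff n‖
          + ∑ i ∈ Sᶜ, ‖r i‖ * ‖PowerSeries.coeff n ((Q i).act q f)‖ := by
        rw [hrec n, norm_neg]
        refine (norm_add_le _ _).trans (add_le_add_right ?_ _)
        refine (norm_sum_le _ _).trans ?_
        exact Finset.sum_le_sum fun i _ => norm_mul_le _ _
      calc g n * (δ * b ^ n) ≤ g n * ‖c n‖ := by
            apply mul_le_mul_of_nonneg_left (hδ n) (norm_nonneg _)
        _ = ‖c n * PowerSeries.coeff n f‖ := by rw [norm_mul, hgk, mul_comm]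
        _ ≤ _ := h1
    -- constants
    set C₀ : ℝ := ∑ k ∈ Finset.range (P.natDegree + 1),
      2 * δ⁻¹ * ‖P.coeff k‖ * ((k:ℝ)+1)^2 / b^k with hC₀
    set C : ℝ := max 1 C₀ with hCdef
    have hC1 : (1:ℝ) ≤ C := le_max_left _ _
    have hC0 : (0:ℝ) < C := by linarith
    have hP : ∀ n, 2 * ‖P.coeff n‖ * ((n:ℝ)+1)^2 ≤ δ * C * b^n := by
      intro n
      rcases le_or_gt n P.natDegree with hn | hn
      · have hterm : 2 * δ⁻¹ * ‖P.coeff n‖ * ((n:ℝ)+1)^2 / b^n ≤ C₀ := by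
          rw [hC₀]
          apply Finset.single_le_sum (f := fun k =>
            2 * δ⁻¹ * ‖P.coeff k‖ * ((k:ℝ)+1)^2 / b^k)
            (fun k _ => by
              apply div_nonneg _ (pow_nonneg hbpos.le k)
              have : (0:ℝ) ≤ δ⁻¹ := inv_nonneg.mpr hδpos.le
              positivity)
            (Finset.mem_range.mpr (by omega))
        have hterm2 : 2 * δ⁻¹ * ‖P.coeff n‖ * ((n:ℝ)+1)^2 / b^n ≤ C :=
          hterm.trans (le_max_right _ _)
        have hbn : (0:ℝ) < b^n := pow_pos hbpos n
        rw [div_le_iff₀ hbn] at hterm2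
        have hδne : δ ≠ 0 := ne_of_gt hδpos
        have hcancel : δ * δ⁻¹ = 1 := mul_inv_cancel₀ hδne
        calc 2 * ‖P.coeff n‖ * ((n:ℝ)+1)^2
            = δ * (2 * δ⁻¹ * ‖P.coeff n‖ * ((n:ℝ)+1)^2) := by
              linear_combination (-(2:ℝ) * ‖P.coeff n‖ * (((n:ℝ)+1)^2)) * hcancel
          _ ≤ δ * (C * b^n) := mul_le_mul_of_nonneg_left hterm2 hδpos.le
          _ = δ * C * b^n := by ring
      · rw [Polynomial.coeff_eq_zero_of_natDegree_lt hn]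
        simp only [norm_zero, mul_zero, zero_mul]
        positivity
    -- per-factor constants
    set E : Fin N → ℝ := fun i => δ⁻¹ * ‖r i‖ * (16*C)^((Q i).alpha.length - 1)
      * (((Q i).a:ℝ)+1)^2 / b^((Q i).a) with hE
    have hEnn : ∀ i, 0 ≤ E i := by
      intro i
      rw [hE]
      have h1 : (0:ℝ) ≤ δ⁻¹ := inv_nonneg.mpr hδpos.le
      have h2 : (0:ℝ) ≤ 16*C := by linarith
      apply div_nonneg _ (pow_nonneg hbpos.le _)
      positivity
    set M : ℝ := max 1 (2 * ∑ i ∈ Sᶜ, E i) with hM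
    have hM1 : (1:ℝ) ≤ M := le_max_left _ _
    have hM0 : (0:ℝ) < M := by linarith
    have hM2 : 2 * ∑ i ∈ Sᶜ, E i ≤ M := le_max_right _ _
    set F : ℕ → ℝ := fun n => δ * C * b^n * M^n / (M * ((n:ℝ)+1)^2) with hF
    have hFnn : ∀ n, 0 ≤ F n := by
      intro n
      rw [hF]
      apply div_nonneg
      · have := hδpos.le; have := hbpos.le; positivity
      · positivity
    refine ⟨C, hC1, M, hM1, ?_⟩
    intro n
    induction n using Nat.strong_induction_on with
    | _ n IH =>
    -- bound each shifting term
    have hterm : ∀ i ∈ Sᶜ, ‖r i‖ * ‖PowerSeries.coeff n ((Q i).act q f)‖ ≤ E i * F n := by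
      intro i hi
      have hia : (Q i).a ≠ 0 := by
        rw [hS] at hi
        simpa using (Finset.mem_compl.mp hi)
      set a : ℕ := (Q i).a with ha
      have ha1 : 1 ≤ a := Nat.one_le_iff_ne_zero.mpr hia
      rcases lt_or_ge n a with hna | hna
      · -- n < a : the coefficient vanishes
        have h0 : PowerSeries.coeff n ((Q i).act q f) = 0 := by
          rw [QFactor.act, PowerSeries.coeff_X_pow_mul', if_neg (by omega)]
        rw [h0, norm_zero, mul_zero]
        exact mul_nonneg (hEnn i) (hFnn n)
      · -- a ≤ n
        set m : ℕ := n - a with hm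
        have hmn : m < n := by omega
        have hman : m + a = n := by omega
        -- bound the product coefficient
        set L : List (PowerSeries ℂ) :=
          (Q i).alpha.map (fun j => PowerSeries.rescale (q ^ j) f) with hL
        have hLne : L ≠ [] := by
          rw [hL]
          intro hmap
          exact (Q i).ne (by simpa using hmap)
        have hLlen : L.length = (Q i).alpha.length := by rw [hL, List.length_map]
        have hfac : ∀ u ∈ L, ∀ k ≤ m, ‖PowerSeries.coeff k u‖
            ≤ C * (b*M)^k / ((k:ℝ)+1)^2 := by
          intro u hu k hk
          obtain ⟨j, hj, rfl⟩ := List.mem_map.mp hu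
          rw [PowerSeries.coeff_rescale, norm_mul, norm_pow, norm_zpow]
          have h1 : ‖q‖ ^ j ≤ b := by
            rw [hb]
            exact zpow_le_zpow_right₀ hq1.le (hdom i hia j hj)
          have h2 : ‖PowerSeries.coeff k f‖ ≤ C * M^k / ((k:ℝ)+1)^2 := by
            rw [← hgk]
            exact IH k (by omega)
          calc (‖q‖ ^ j) ^ k * ‖PowerSeries.coeff k f‖
              ≤ b ^ k * (C * M^k / ((k:ℝ)+1)^2) := by
                apply mul_le_mul (pow_le_pow_left₀ (zpow_nonneg (by linarith) j) h1 k) h2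
                  (norm_nonneg _) (pow_nonneg hbpos.le k)
            _ = C * (b*M)^k / ((k:ℝ)+1)^2 := by
                rw [mul_pow]; ring
        have hprod := list_prod_bound L hLne C (b*M) hC0.le
          (mul_nonneg hbpos.le hM0.le) m hfac m le_rfl
        have hcoeffn : ‖PowerSeries.coeff n ((Q i).act q f)‖
            = ‖PowerSeries.coeff m L.prod‖ := by
          rw [QFactor.act, PowerSeries.coeff_X_pow_mul', if_pos hna, ← hL, ← hm]
        -- numeric comparison
        set ℓ : ℕ := (Q i).alpha.length with hℓ
        have hnum : M^m / ((m:ℝ)+1)^2 ≤ ((a:ℝ)+1)^2 * M^(n-1) / ((n:ℝ)+1)^2 := by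
          rw [div_le_div_iff₀ (by positivity) (by positivity)]
          have h1 : M^m ≤ M^(n-1) := pow_le_pow_right₀ hM1 (by omega)
          have h2 : ((n:ℝ)+1) ≤ ((a:ℝ)+1)*((m:ℝ)+1) := by
            have hnat : n + 1 ≤ (a+1)*(m+1) := by nlinarith [Nat.zero_le (a*m)]
            calc ((n:ℝ)+1) = ((n+1 : ℕ):ℝ) := by push_cast; ring
              _ ≤ (((a+1)*(m+1) : ℕ):ℝ) := by exact_mod_cast hnat
              _ = ((a:ℝ)+1)*((m:ℝ)+1) := by push_cast; ring
          have h2sq : ((n:ℝ)+1)^2 ≤ (((a:ℝ)+1)*((m:ℝ)+1))^2 :=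
            pow_le_pow_left₀ (by positivity) h2 2
          calc M^m * ((n:ℝ)+1)^2 ≤ M^(n-1) * (((a:ℝ)+1)*((m:ℝ)+1))^2 :=
                mul_le_mul h1 h2sq (by positivity) (by positivity)
            _ = ((a:ℝ)+1)^2 * M^(n-1) * ((m:ℝ)+1)^2 := by ring
        -- identity for E i * F n
        have hbn : b^n = b^a * b^m := by rw [← pow_add]; congr 1; omega
        have hMn : M^n = M * M^(n-1) := by
          rw [← pow_succ']; congr 1; omega
        have hid : E i * F n = ‖r i‖ * C * (16*C)^(ℓ - 1) * b^m
            * (((a:ℝ)+1)^2 * M^(n-1) / ((n:ℝ)+1)^2) := by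
          rw [hE, hF]
          simp only []
          rw [hbn, hMn]
          have hδ0 : δ ≠ 0 := ne_of_gt hδpos
          have hb0 : (b:ℝ)^a ≠ 0 := ne_of_gt (pow_pos hbpos a)
          have hM0' : M ≠ 0 := ne_of_gt hM0
          have hn0 : (((n:ℝ)+1)^2) ≠ 0 := by positivity
          field_simp
          ring
        calc ‖r i‖ * ‖PowerSeries.coeff n ((Q i).act q f)‖
            = ‖r i‖ * ‖PowerSeries.coeff m L.prod‖ := by rw [hcoeffn]
          _ ≤ ‖r i‖ * (C * (16*C)^(L.length - 1) * (b*M)^m / ((m:ℝ)+1)^2) :=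
              mul_le_mul_of_nonneg_left hprod (norm_nonneg _)
          _ = (‖r i‖ * C * (16*C)^(ℓ - 1) * b^m) * (M^m / ((m:ℝ)+1)^2) := by
              rw [hLlen, mul_pow]; ring
          _ ≤ (‖r i‖ * C * (16*C)^(ℓ - 1) * b^m)
              * (((a:ℝ)+1)^2 * M^(n-1) / ((n:ℝ)+1)^2) := by
              apply mul_le_mul_of_nonneg_left hnum
              have h2 : (0:ℝ) ≤ 16*C := by linarith
              have := pow_nonneg hbpos.le m
              positivity
          _ = E i * F n := by rw [hid]
    -- assemble
    have hPn : ‖P.coeff n‖ ≤ δ * C * b^n * M^n / (2*((n:ℝ)+1)^2) := by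
      have h1 : 2 * ‖P.coeff n‖ * ((n:ℝ)+1)^2 ≤ δ * C * b^n * M^n := by
        refine (hP n).trans ?_
        have : (1:ℝ) ≤ M^n := one_le_pow₀ hM1
        have hnn : (0:ℝ) ≤ δ * C * b^n := by
          have := hbpos.le; have := hδpos.le; positivity
        nlinarith
      rw [le_div_iff₀ (by positivity)]
      linarith
    have hSum : ∑ i ∈ Sᶜ, ‖r i‖ * ‖PowerSeries.coeff n ((Q i).act q f)‖
        ≤ δ * C * b^n * M^n / (2*((n:ℝ)+1)^2) := by
      calc ∑ i ∈ Sᶜ, ‖r i‖ * ‖PowerSeries.coeff n ((Q i).act q f)‖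
          ≤ ∑ i ∈ Sᶜ, E i * F n := Finset.sum_le_sum hterm
        _ = (∑ i ∈ Sᶜ, E i) * F n := (Finset.sum_mul _ _ _).symm
        _ ≤ (M/2) * F n := by
            apply mul_le_mul_of_nonneg_right _ (hFnn n)
            linarith
        _ = δ * C * b^n * M^n / (2*((n:ℝ)+1)^2) := by
            have hgen : ∀ X Y : ℝ, Y ≠ 0 → M/2 * (X/(M*Y)) = X/(2*Y) := by
              intro X Y hY
              have hM0' : M ≠ 0 := ne_of_gt hM0
              field_simp
            rw [hF]
            exact hgen _ _ (by positivity)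
    have hfinal : g n * (δ * b^n) ≤ δ * C * b^n * M^n / ((n:ℝ)+1)^2 := by
      calc g n * (δ * b^n) ≤ ‖P.coeff n‖
          + ∑ i ∈ Sᶜ, ‖r i‖ * ‖PowerSeries.coeff n ((Q i).act q f)‖ := key n
        _ ≤ δ * C * b^n * M^n / (2*((n:ℝ)+1)^2) + δ * C * b^n * M^n / (2*((n:ℝ)+1)^2) :=
            add_le_add hPn hSum
        _ = δ * C * b^n * M^n / ((n:ℝ)+1)^2 := by
            have hgen2 : ∀ X Y : ℝ, Y ≠ 0 → X/(2*Y) + X/(2*Y) = X/Y := by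
              intro X Y hY
              field_simp
              ring
            exact hgen2 _ _ (by positivity)
    have hpos : (0:ℝ) < δ * b^n := mul_pos hδpos (pow_pos hbpos n)
    rw [← mul_le_mul_iff_of_pos_right hpos]
    calc g n * (δ * b^n) ≤ δ * C * b^n * M^n / ((n:ℝ)+1)^2 := hfinal
      _ = C * M^n / ((n:ℝ)+1)^2 * (δ * b^n) := by ring
  -- conclude
  have hMpos : (0:ℝ) < M := by linarith
  set ρ : NNReal := Real.toNNReal M⁻¹ with hρ
  have hρpos : 0 < ρ := by
    rw [hρ, Real.toNNReal_pos]
    positivity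
  have hle : (ρ : ENNReal) ≤ seriesRadius (fun n => PowerSeries.coeff n f) := by
    apply le_iSup₂ (f := fun (ρ : NNReal)
      (_ : ∃ C : ℝ, ∀ n : ℕ, ‖PowerSeries.coeff n f‖ * (ρ : ℝ) ^ n ≤ C) => (ρ : ENNReal)) ρ
    refine ⟨C, fun n => ?_⟩
    have hcoe : (ρ : ℝ) = M⁻¹ := Real.coe_toNNReal _ (by positivity)
    rw [hcoe]
    have h1 : g n * (M⁻¹)^n ≤ (C * M^n / ((n:ℝ)+1)^2) * (M⁻¹)^n :=
      mul_le_mul_of_nonneg_right (hbound n) (by positivity)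
    have h2 : (C * M^n / ((n:ℝ)+1)^2) * (M⁻¹)^n ≤ C := by
      rw [div_mul_eq_mul_div, mul_assoc, ← mul_pow, mul_inv_cancel₀ (by positivity : M ≠ 0),
        one_pow, mul_one]
      rw [div_le_iff₀ (by positivity)]
      have hn : (0:ℝ) ≤ (n:ℝ) := Nat.cast_nonneg n
      nlinarith [mul_le_mul_of_nonneg_left (by nlinarith : (1:ℝ) ≤ ((n:ℝ)+1)^2)
        (by linarith : (0:ℝ) ≤ C)]
    exact h1.trans h2
  calc (0:ENNReal) < (ρ : ENNReal) := by exact_mod_cast hρpos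
    _ ≤ _ := hle
end

section
/- Consider a reduced q-algebraic equation whose q-factors have been collected, satisfying the existence condition, with 0 = α(Q₀) < α(Q₊), and let f be the formal power series solution. Assume moreover that q is real with q > 1 and that all the numbers P_i (0 ≤ i ≤ p), r_A for A ∈ Q₊, and −r_A for A ∈ Q₀ are real and of the same sign (all nonnegative, or all nonpositive). Then every coefficient f_n of the solution is a nonnegative real number. -/
open scoped Classical
open PowerSeries Filter Topology

open ComplexOrder in
private lemma nn_iff' (z : ℂ) : 0 ≤ z ↔ z.im = 0 ∧ 0 ≤ z.re := by
  simp [Complex.le_def, eq_comm, and_comm]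

open ComplexOrder in
private lemma np_iff' (z : ℂ) : z ≤ 0 ↔ z.im = 0 ∧ z.re ≤ 0 := by
  simp [Complex.le_def, and_comm]

open ComplexOrder in
private lemma inv_nn' {z : ℂ} (h : 0 ≤ z) : 0 ≤ z⁻¹ := by
  rw [nn_iff'] at h ⊢
  have hz : z = (z.re : ℂ) := Complex.ext rfl (by simp [h.1])
  rw [hz, ← Complex.ofReal_inv]
  exact ⟨by simp, by simpa using inv_nonneg.2 h.2⟩

open ComplexOrder in
private lemma qpow_nn' {q : ℂ} (hqre : q.im = 0) (hqgt : 1 < q.re) (a : ℤ) : 0 ≤ q ^ a := by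
  have hz : q = (q.re : ℂ) := Complex.ext rfl (by simp [hqre])
  rw [hz, ← Complex.ofReal_zpow]
  exact Complex.zero_le_real.2 (zpow_nonneg (by linarith) a)

open ComplexOrder in
private lemma prod_coeff_nn' (k : ℕ) :
    ∀ (l : List (PowerSeries ℂ)),
      (∀ g ∈ l, ∀ m : ℕ, m ≤ k → 0 ≤ PowerSeries.coeff m g) →
      ∀ m : ℕ, m ≤ k → 0 ≤ PowerSeries.coeff m l.prod := by
  intro l
  induction l with
  | nil =>
    intro _ m _
    rw [List.prod_nil, PowerSeries.coeff_one]
    split <;> norm_num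
  | cons g t ih =>
    intro h m hm
    rw [List.prod_cons, PowerSeries.coeff_mul]
    apply Finset.sum_nonneg
    intro p hp
    have h1 := Finset.HasAntidiagonal.antidiagonal.fst_le hp
    have h2 := Finset.HasAntidiagonal.antidiagonal.snd_le hp
    exact mul_nonneg (h g (by simp) p.1 (le_trans h1 hm))
      (ih (fun g' hg' m' hm' => h g' (by simp [hg']) m' hm') p.2 (le_trans h2 hm))

/-- for a reduced q-algebraic equation with collected q-factors satisfying the
existence condition, with 0 = α(Q₀) < α(Q₊), q real with q > 1, if all the numbers P_i,
r_A (A ∈ Q₊) and −r_A (A ∈ Q₀) are real of one common sign, then every coefficient of the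
solution is a nonnegative real number. -/
theorem stmt4 {N : ℕ} (q : ℂ) (hqre : q.im = 0) (hqgt : 1 < q.re)
    (Q : Fin N → QFactor) (r : Fin N → ℂ) (hr : ∀ i, r i ≠ 0) (P : Polynomial ℂ)
    (hred : Reduced Q) (hcol : Function.Injective Q) (hcond : ExistCond q Q r)
    -- α(Q₀) = 0
    (hα0 : (∀ i, (Q i).a = 0 → (Q i).alphaLast ≤ 0) ∧ ∃ i, (Q i).a = 0 ∧ (Q i).alphaLast = 0)
    -- α(Q₊) > 0 (in particular Q₊ ≠ ∅)
    (hαplus : ∃ i, 0 < (Q i).a ∧ 0 < (Q i).alphaLast)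
    -- the P_i, the r_A for A ∈ Q₊ and the −r_A for A ∈ Q₀ are real, all of the same sign
    (hsign :
      ((∀ n : ℕ, (P.coeff n).im = 0 ∧ 0 ≤ (P.coeff n).re) ∧
        (∀ i, 0 < (Q i).a → (r i).im = 0 ∧ 0 ≤ (r i).re) ∧
        (∀ i, (Q i).a = 0 → (r i).im = 0 ∧ (r i).re ≤ 0)) ∨
      ((∀ n : ℕ, (P.coeff n).im = 0 ∧ (P.coeff n).re ≤ 0) ∧
        (∀ i, 0 < (Q i).a → (r i).im = 0 ∧ (r i).re ≤ 0) ∧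
        (∀ i, (Q i).a = 0 → (r i).im = 0 ∧ 0 ≤ (r i).re)))
    (f : PowerSeries ℂ) (hf : QAlgEq q Q r P f) :
    ∀ n : ℕ, (PowerSeries.coeff n f).im = 0 ∧ 0 ≤ (PowerSeries.coeff n f).re := by
    classical
  open ComplexOrder in
  suffices H : ∀ n : ℕ, 0 ≤ PowerSeries.coeff n f by
    intro n
    exact (nn_iff' _).1 (H n)
  intro n
  induction n using Nat.strong_induction_on with
  | _ n IH =>
  -- the coefficient-n equation
  have heq : P.coeff n + ∑ i, r i * PowerSeries.coeff n ((Q i).act q f) = 0 := by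
    have h0 := congrArg (PowerSeries.coeff n) hf
    simpa [map_add, map_sum, PowerSeries.coeff_C_mul, Polynomial.coeff_coe] using h0
  -- coefficient of a nonshifting (linear) factor
  have act0 : ∀ i, (Q i).a = 0 →
      PowerSeries.coeff n ((Q i).act q f)
        = q ^ ((Q i).alphaFirst * (n : ℤ)) * PowerSeries.coeff n f := by
    intro i hi
    obtain ⟨b, hb⟩ := List.length_eq_one_iff.1 (hred i hi)
    have hfirst : (Q i).alphaFirst = b := by simp [QFactor.alphaFirst, hb]
    rw [QFactor.act, hi, pow_zero, one_mul, hb, hfirst]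
    simp [PowerSeries.coeff_rescale, zpow_mul, zpow_natCast]
  -- nonnegativity of shifting coefficients
  have actpos : ∀ i, (Q i).a ≠ 0 → 0 ≤ PowerSeries.coeff n ((Q i).act q f) := by
    intro i hi
    rw [QFactor.act, mul_comm, PowerSeries.coeff_mul_X_pow']
    split
    · next hle =>
      apply prod_coeff_nn' (n - (Q i).a) _ _ _ le_rfl
      intro g hg m hm
      obtain ⟨j, _, rfl⟩ := List.mem_map.1 hg
      rw [PowerSeries.coeff_rescale, ← zpow_natCast, ← zpow_mul]
      exact mul_nonneg (qpow_nn' hqre hqgt _) (IH m (by omega))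
    · exact le_rfl
  -- split the sum
  set s0 : Finset (Fin N) := Finset.univ.filter (fun i => (Q i).a = 0) with hs0
  rw [← Finset.sum_filter_add_sum_filter_not Finset.univ (fun i => (Q i).a = 0)] at heq
  set D : ℂ := ∑ i ∈ s0, r i * q ^ ((Q i).alphaFirst * (n : ℤ)) with hD
  have hsum0 : ∑ i ∈ s0, r i * PowerSeries.coeff n ((Q i).act q f)
      = D * PowerSeries.coeff n f := by
    rw [hD, Finset.sum_mul]
    refine Finset.sum_congr rfl fun i hi => ?_
    rw [act0 i (Finset.mem_filter.1 hi).2, ← mul_assoc]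
  rw [hsum0] at heq
  set T : ℂ := ∑ i ∈ Finset.univ.filter (fun i => ¬ (Q i).a = 0),
      r i * PowerSeries.coeff n ((Q i).act q f) with hT
  have hDne : D ≠ 0 := by
    have := hcond n
    rwa [← Finset.sum_filter] at this
  have hmain : PowerSeries.coeff n f * D = -(P.coeff n + T) := by
    linear_combination heq
  rcases hsign with ⟨hP, hrp, hrm⟩ | ⟨hP, hrp, hrm⟩
  · -- case: P ≥ 0, shifting r ≥ 0, nonshifting r ≤ 0
    have hTnn : 0 ≤ T := by
      apply Finset.sum_nonneg
      intro i hi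
      have hia : (Q i).a ≠ 0 := (Finset.mem_filter.1 hi).2
      exact mul_nonneg ((nn_iff' _).2 (hrp i (Nat.pos_of_ne_zero hia))) (actpos i hia)
    have hPnn : 0 ≤ P.coeff n := (nn_iff' _).2 (hP n)
    have hnDnn : 0 ≤ -D := by
      rw [hD, ← Finset.sum_neg_distrib]
      apply Finset.sum_nonneg
      intro i hi
      rw [← neg_mul]
      exact mul_nonneg ((nn_iff' _).2 ⟨by simp [(hrm i (Finset.mem_filter.1 hi).2).1],
        by simpa using (hrm i (Finset.mem_filter.1 hi).2).2⟩) (qpow_nn' hqre hqgt _)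
    have h2 : PowerSeries.coeff n f * (-D) = P.coeff n + T := by
      rw [mul_neg, hmain, neg_neg]
    have hfn : PowerSeries.coeff n f = (P.coeff n + T) * (-D)⁻¹ := by
      rw [← h2, mul_assoc, mul_inv_cancel₀ (neg_ne_zero.2 hDne), mul_one]
    rw [hfn]
    exact mul_nonneg (add_nonneg hPnn hTnn) (inv_nn' hnDnn)
  · -- case: P ≤ 0, shifting r ≤ 0, nonshifting r ≥ 0
    have hTnn : 0 ≤ -T := by
      rw [hT, ← Finset.sum_neg_distrib]
      apply Finset.sum_nonneg
      intro i hi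
      have hia : (Q i).a ≠ 0 := (Finset.mem_filter.1 hi).2
      rw [← neg_mul]
      exact mul_nonneg ((nn_iff' _).2 ⟨by simp [(hrp i (Nat.pos_of_ne_zero hia)).1],
        by simpa using (hrp i (Nat.pos_of_ne_zero hia)).2⟩) (actpos i hia)
    have hPnn : 0 ≤ -(P.coeff n) := by
      have := (np_iff' _).2 (hP n)
      simpa using neg_nonneg.2 this
    have hDnn : 0 ≤ D := by
      rw [hD]
      apply Finset.sum_nonneg
      intro i hi
      exact mul_nonneg ((nn_iff' _).2 (hrm i (Finset.mem_filter.1 hi).2))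
        (qpow_nn' hqre hqgt _)
    have h2 : PowerSeries.coeff n f * D = -(P.coeff n) + -T := by
      rw [hmain]; ring
    have hfn : PowerSeries.coeff n f = (-(P.coeff n) + -T) * D⁻¹ := by
      rw [← h2, mul_assoc, mul_inv_cancel₀ hDne, mul_one]
    rw [hfn]
    exact mul_nonneg (add_nonneg hPnn hTnn) (inv_nn' hDnn)
end

section
/- Let A = (a;α₁,…,α_ℓ) be a q-factor, let H > 0 and h be real numbers, and let n ≥ a and 1 ≤ k ≤ min(ℓ, n−a) be integers. Then the minimum of D_A(n₁,…,n_ℓ) over all ℓ-tuples (n₁,…,n_ℓ) of nonnegative integers with n₁+⋯+n_ℓ = n−a having exactly k positive entries equals n(2Ha − α_ℓ + 2H(k−1)) − θ(A,k), and this minimum is attained at the tuple consisting of ℓ−k zeros followed by k−1 ones and the final entry n−a−k+1. -/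
open scoped Classical
open PowerSeries Filter Topology

/-- d_m = H m (m − h) -/
noncomputable def dseq (H h : ℝ) (m : ℕ) : ℝ := H * m * ((m : ℝ) - h)

/-- D_A(n₁,…,n_ℓ) = d_{n₁+⋯+n_ℓ+a} − (d_{n₁}+⋯+d_{n_ℓ}) − (α₁n₁+⋯+α_ℓn_ℓ) -/
noncomputable def Dfun (H h : ℝ) (A : QFactor) (t : Fin A.alpha.length → ℕ) : ℝ :=
  dseq H h (∑ i, t i + A.a) - (∑ i, dseq H h (t i)) -
    ∑ i, ((A.alpha.get i : ℝ) * (t i : ℝ))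

/-- θ(A,k) -/
noncomputable def theta (H h : ℝ) (A : QFactor) (k : ℕ) : ℝ :=
  if k = 1 then H * (A.a : ℝ) ^ 2 + (H * h - (A.alphaLast : ℝ)) * (A.a : ℝ)
  else
    H * ((A.a : ℝ) + (k : ℝ) - 1) ^ 2 +
      (H * h - (A.alphaLast : ℝ)) * ((A.a : ℝ) + (k : ℝ) - 1) +
      ((k : ℝ) - 1) * H * (1 - h) +
      ((((A.alpha.drop (A.alpha.length - k)).take (k - 1)).sum : ℤ) : ℝ)

private lemma myslice (l : List ℤ) (d : ℕ) : ∀ m, d + m ≤ l.length →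
    ((l.drop d).take m).sum = ∑ j ∈ Finset.range m, l.getD (d+j) 0 := by
  intro m
  induction m with
  | zero => simp
  | succ m ih =>
    intro h
    have hdm : d + m < l.length := by omega
    have hm : m < (l.drop d).length := by simp; omega
    rw [List.take_succ, List.sum_append, ih (by omega), Finset.sum_range_succ]
    congr 1
    simp [List.getElem?_eq_getElem hm, List.getElem?_eq_getElem hdm,
      List.getD_eq_getElem _ _ hdm, List.getElem_drop]

private lemma finfilter_sum {M : Type*} [AddCommMonoid M] (ℓ : ℕ) (f : ℕ → M) (p : ℕ → Prop)
    [DecidablePred p] :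
    ∑ i ∈ Finset.univ.filter (fun i : Fin ℓ => p ↑i), f ↑i = ∑ j ∈ (Finset.range ℓ).filter p, f j := by
  rw [Finset.sum_filter, Finset.sum_filter, Fin.sum_univ_eq_sum_range (fun j => if p j then f j else 0)]

private lemma finfilter_card (ℓ : ℕ) (p : ℕ → Prop) [DecidablePred p] :
    (Finset.univ.filter (fun i : Fin ℓ => p ↑i)).card = ((Finset.range ℓ).filter p).card := by
  rw [Finset.card_filter, Finset.card_filter,
    Fin.sum_univ_eq_sum_range (fun j => if p j then 1 else 0)]

private lemma range_filter_le (a ℓ : ℕ) :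
    (Finset.range ℓ).filter (fun j => a ≤ j) = Finset.Ico a ℓ := by
  ext j; simp [Finset.mem_Ico]; omega

-- key1 : sum over the top-k index set is the least among k-subsets, for antitone β
private lemma key1 {ℓ k : ℕ} (β : Fin ℓ → ℤ) (hb : ∀ i j : Fin ℓ, i ≤ j → β j ≤ β i)
    (S : Finset (Fin ℓ)) (hS : S.card = k) (hk : 1 ≤ k) (hkl : k ≤ ℓ) :
    ∑ i ∈ Finset.univ.filter (fun i : Fin ℓ => ℓ - k ≤ ↑i), β i ≤ ∑ i ∈ S, β i := by
  have hl : 0 < ℓ := by omega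
  set high := Finset.univ.filter (fun i : Fin ℓ => ℓ - k ≤ ↑i) with hhigh
  have hhc : high.card = k := by
    rw [hhigh, finfilter_card, range_filter_le, Nat.card_Ico]; omega
  set p : Fin ℓ := ⟨ℓ - k, by omega⟩ with hp
  set T := high \ S with hT
  set Shigh := high ∩ S with hSh
  set Slow := S \ high with hSl
  have hcard1 : (high \ S).card + (high ∩ S).card = high.card := Finset.card_sdiff_add_card_inter high S
  have hcard2 : (S \ high).card + (S ∩ high).card = S.card := Finset.card_sdiff_add_card_inter S high
  have hic : S ∩ high = high ∩ S := Finset.inter_comm S high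
  have hTc : T.card = Slow.card := by
    rw [hT, hSl]; rw [hic] at hcard2; omega
  have h1 : ∑ i ∈ T, β i ≤ T.card • β p := by
    apply Finset.sum_le_card_nsmul
    intro x hx
    apply hb
    have : ℓ - k ≤ ↑x := by
      have := (Finset.mem_sdiff.1 hx).1
      rw [hhigh] at this; exact (Finset.mem_filter.1 this).2
    exact Fin.le_def.2 (by simp [hp]; omega)
  have h2 : Slow.card • β p ≤ ∑ i ∈ Slow, β i := by
    apply Finset.card_nsmul_le_sum
    intro x hx
    apply hb
    have : ¬ (ℓ - k ≤ ↑x) := by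
      have := (Finset.mem_sdiff.1 hx).2
      rw [hhigh] at this; simpa using this
    exact Fin.le_def.2 (by simp [hp]; omega)
  have e1 : ∑ i ∈ Shigh, β i + ∑ i ∈ T, β i = ∑ i ∈ high, β i := by
    rw [hSh, hT]; exact Finset.sum_inter_add_sum_sdiff high S β
  have e2 : ∑ i ∈ Shigh, β i + ∑ i ∈ Slow, β i = ∑ i ∈ S, β i := by
    rw [hSh, hSl, ← hic]; exact Finset.sum_inter_add_sum_sdiff S high β
  have hTc' : (T.card : ℤ) • β p = (Slow.card : ℤ) • β p := by rw [hTc]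
  simp only [nsmul_eq_mul] at h1 h2
  rw [hTc] at h1
  linarith

private lemma range_filter_le' (a ℓ : ℕ) :
    (Finset.range ℓ).filter (fun j => a ≤ j) = Finset.Ico a ℓ := by
  ext j; simp [Finset.mem_Ico]; omega

private lemma tstar_wsum (ℓ k : ℕ) (hk1 : 1 ≤ k) (hkl : k ≤ ℓ) (α : ℕ → ℤ) (u v : ℤ) :
    ∑ j ∈ Finset.range ℓ, α j * (if j + k < ℓ then 0 else if j + 1 < ℓ then u else v)
      = (∑ j ∈ Finset.range (k-1), α (ℓ - k + j)) * u + α (ℓ-1) * v := by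
  obtain ⟨m, rfl⟩ : ∃ m, ℓ = m + 1 := ⟨ℓ - 1, by omega⟩
  rw [Finset.sum_range_succ]
  have h1 : ¬ (m + k < m + 1) := by omega
  have h2 : ¬ (m + 1 < m + 1) := by omega
  rw [if_neg h1, if_neg h2]
  have h3 : ∀ j ∈ Finset.range m,
      α j * (if j + k < m + 1 then 0 else if j + 1 < m + 1 then u else v)
        = if m + 1 - k ≤ j then α j * u else 0 := by
    intro j hj
    rw [Finset.mem_range] at hj
    split_ifs <;> first | ring1 | (exfalso; omega)
  rw [Finset.sum_congr rfl h3, ← Finset.sum_filter, range_filter_le',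
    Finset.sum_Ico_eq_sum_range, ← Finset.sum_mul]
  have h4 : m - (m + 1 - k) = k - 1 := by omega
  have h5 : m + 1 - 1 = m := by omega
  rw [h4, h5]

private lemma tstar_sum (ℓ k : ℕ) (hk1 : 1 ≤ k) (hkl : k ≤ ℓ) (u v : ℕ) :
    ∑ j ∈ Finset.range ℓ, (if j + k < ℓ then 0 else if j + 1 < ℓ then u else v)
      = (k-1) * u + v := by
  have := tstar_wsum ℓ k hk1 hkl (fun _ => 1) (u : ℤ) (v : ℤ)
  simp only [one_mul] at this
  have hc : ∑ j ∈ Finset.range ℓ, ((if j + k < ℓ then 0 else if j + 1 < ℓ then u else v : ℕ) : ℤ)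
      = ∑ j ∈ Finset.range ℓ, (if j + k < ℓ then 0 else if j + 1 < ℓ then (u:ℤ) else (v:ℤ)) := by
    apply Finset.sum_congr rfl
    intro j _
    split_ifs <;> simp
  have : ((∑ j ∈ Finset.range ℓ, (if j + k < ℓ then 0 else if j + 1 < ℓ then u else v) : ℕ) : ℤ)
      = (((k-1) * u + v : ℕ) : ℤ) := by
    rw [Nat.cast_sum, hc, this]
    simp only [Finset.sum_const, Finset.card_range, nsmul_eq_mul, mul_one]
    rw [Nat.cast_add, Nat.cast_mul, Nat.cast_sub hk1]
  exact_mod_cast this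

private lemma Dform (A : QFactor) (H h : ℝ) (n : ℕ) (hn : A.a ≤ n)
    (t : Fin A.alpha.length → ℕ) (hsum : ∑ i, t i = n - A.a) :
    Dfun H h A t = H*n*((n:ℝ)-h) + H*h*(((n - A.a : ℕ)):ℝ)
      - H * (((∑ i, (t i)^2 : ℕ)):ℝ) - (((∑ i, A.alpha.get i * (t i : ℤ) : ℤ)):ℝ) := by
  have h1 : ∑ i, t i + A.a = n := by omega
  simp only [Dfun, dseq]
  rw [h1]
  have e1 : ∑ i, H * (t i : ℝ) * ((t i : ℝ) - h)
      = H * (((∑ i, (t i)^2 : ℕ)):ℝ) - H*h*(((n - A.a : ℕ)):ℝ) := by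
    rw [← hsum]
    push_cast
    rw [Finset.mul_sum, Finset.mul_sum, ← Finset.sum_sub_distrib]
    exact Finset.sum_congr rfl (fun i _ => by ring)
  have e2 : ∑ i, ((A.alpha.get i : ℝ) * (t i : ℝ))
      = (((∑ i, A.alpha.get i * (t i : ℤ) : ℤ)):ℝ) := by
    push_cast
    ring
  rw [e1, e2]
  ring

private lemma theta_eq (A : QFactor) (H h : ℝ) (k : ℕ) (hk1 : 1 ≤ k) (hkl : k ≤ A.alpha.length) :
    theta H h A k = H*((A.a:ℝ)+(k:ℝ)-1)^2 + (H*h-(A.alphaLast:ℝ))*((A.a:ℝ)+(k:ℝ)-1)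
      + ((k:ℝ)-1)*H*(1-h)
      + (((∑ j ∈ Finset.range (k-1), A.alpha.getD (A.alpha.length - k + j) 0 : ℤ)) : ℝ) := by
  have hsl : ((A.alpha.drop (A.alpha.length - k)).take (k-1)).sum
      = ∑ j ∈ Finset.range (k-1), A.alpha.getD (A.alpha.length - k + j) 0 :=
    myslice _ _ _ (by omega)
  by_cases hk : k = 1
  · subst hk
    simp [theta]
  · rw [theta, if_neg hk, hsl]

private lemma get_eq_getD (A : QFactor) (i : Fin A.alpha.length) :
    A.alpha.get i = A.alpha.getD ↑i 0 := by
  rw [List.get_eq_getElem, List.getD_eq_getElem _ _ i.isLt]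

private lemma last_eq_getD (A : QFactor) :
    A.alphaLast = A.alpha.getD (A.alpha.length - 1) 0 := by
  have hl : 0 < A.alpha.length := List.length_pos_iff.2 A.ne
  rw [QFactor.alphaLast, List.getLast_eq_getElem,
    List.getD_eq_getElem _ _ (show A.alpha.length - 1 < A.alpha.length by omega)]

/-- the minimum of D_A over tuples summing to n − a with exactly k positive
entries is n(2Ha − α_ℓ + 2H(k−1)) − θ(A,k), attained at (0,…,0,1,…,1,n−a−k+1). -/
theorem stmt11 (A : QFactor) (H h : ℝ) (hH : 0 < H) (n k : ℕ)
    (hn : A.a ≤ n) (hk1 : 1 ≤ k) (hkl : k ≤ A.alpha.length) (hkn : k ≤ n - A.a) :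
    (∀ t : Fin A.alpha.length → ℕ, (∑ i, t i) = n - A.a →
      ((Finset.univ.filter fun i => 0 < t i).card = k) →
      (n : ℝ) * (2 * H * (A.a : ℝ) - (A.alphaLast : ℝ) + 2 * H * ((k : ℝ) - 1)) -
          theta H h A k
        ≤ Dfun H h A t) ∧
    ((∑ i, (fun i : Fin A.alpha.length =>
        if (i : ℕ) + k < A.alpha.length then 0
        else if (i : ℕ) + 1 < A.alpha.length then 1
        else n - A.a - k + 1) i) = n - A.a) ∧
    ((Finset.univ.filter fun i : Fin A.alpha.length =>
        0 < (if (i : ℕ) + k < A.alpha.length then 0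
          else if (i : ℕ) + 1 < A.alpha.length then 1
          else n - A.a - k + 1)).card = k) ∧
    Dfun H h A (fun i =>
        if (i : ℕ) + k < A.alpha.length then 0
        else if (i : ℕ) + 1 < A.alpha.length then 1
        else n - A.a - k + 1) =
      (n : ℝ) * (2 * H * (A.a : ℝ) - (A.alphaLast : ℝ) + 2 * H * ((k : ℝ) - 1)) -
        theta H h A k := by
  have hl : 0 < A.alpha.length := List.length_pos_iff.2 A.ne
  -- cast facts
  have er1 : ((n - A.a : ℕ) : ℝ) = (n : ℝ) - A.a := by
    rw [Nat.cast_sub hn]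
  have er2 : ((n - A.a - k + 1 : ℕ) : ℝ) = (n : ℝ) - A.a - k + 1 := by
    push_cast [Nat.cast_sub hkn, Nat.cast_sub hn]
    ring
  have ez1 : ((n - A.a - k + 1 : ℕ) : ℤ) = (n : ℤ) - A.a - k + 1 := by omega
  have ez2 : ((n - A.a : ℕ) : ℤ) = (n : ℤ) - A.a := by omega
  -- the interesting exponent sum
  set Tsum : ℤ := ∑ j ∈ Finset.range (k-1), A.alpha.getD (A.alpha.length - k + j) 0 with hTdef
  -- sum of get over the top k indices
  have hhs : ∑ i ∈ Finset.univ.filter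
        (fun i : Fin A.alpha.length => A.alpha.length - k ≤ ↑i), A.alpha.get i
      = Tsum + A.alphaLast := by
    rw [Finset.sum_congr rfl (fun i _ => get_eq_getD A i),
      finfilter_sum A.alpha.length (fun j => A.alpha.getD j 0)
        (fun j => A.alpha.length - k ≤ j),
      range_filter_le, Finset.sum_Ico_eq_sum_range]
    have h1 : A.alpha.length - (A.alpha.length - k) = k := by omega
    have h2 : k = (k-1) + 1 := by omega
    rw [h1, last_eq_getD, hTdef]
    rw [h2, Finset.sum_range_succ]
    congr 2
    omega
  have hhc : (Finset.univ.filter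
        (fun i : Fin A.alpha.length => A.alpha.length - k ≤ ↑i)).card = k := by
    rw [finfilter_card, range_filter_le, Nat.card_Ico]
    omega
  -- part 2 : sum of the optimal tuple
  have part2 : (∑ i, (fun i : Fin A.alpha.length =>
      if (i : ℕ) + k < A.alpha.length then 0
      else if (i : ℕ) + 1 < A.alpha.length then 1
      else n - A.a - k + 1) i) = n - A.a := by
    simp only []
    rw [Fin.sum_univ_eq_sum_range (fun j => if j + k < A.alpha.length then 0
      else if j + 1 < A.alpha.length then 1 else n - A.a - k + 1)]
    rw [tstar_sum _ _ hk1 hkl]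
    omega
  -- part 3 : number of positive entries of the optimal tuple
  have part3 : ((Finset.univ.filter fun i : Fin A.alpha.length =>
      0 < (if (i : ℕ) + k < A.alpha.length then 0
        else if (i : ℕ) + 1 < A.alpha.length then 1
        else n - A.a - k + 1)).card = k) := by
    rw [finfilter_card A.alpha.length (fun j => 0 < (if j + k < A.alpha.length then 0
      else if j + 1 < A.alpha.length then 1 else n - A.a - k + 1))]
    have he : (Finset.range A.alpha.length).filter
        (fun j => 0 < (if j + k < A.alpha.length then 0
          else if j + 1 < A.alpha.length then 1 else n - A.a - k + 1))
        = Finset.Ico (A.alpha.length - k) A.alpha.length := by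
      ext j
      simp only [Finset.mem_filter, Finset.mem_range, Finset.mem_Ico]
      split_ifs <;> omega
    rw [he, Nat.card_Ico]
    omega
  -- part 4 : the value at the optimal tuple
  have part4 : Dfun H h A (fun i =>
      if (i : ℕ) + k < A.alpha.length then 0
      else if (i : ℕ) + 1 < A.alpha.length then 1
      else n - A.a - k + 1) =
      (n : ℝ) * (2 * H * (A.a : ℝ) - (A.alphaLast : ℝ) + 2 * H * ((k : ℝ) - 1)) -
        theta H h A k := by
    have hsq : (∑ i : Fin A.alpha.length,
        ((if (i : ℕ) + k < A.alpha.length then 0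
          else if (i : ℕ) + 1 < A.alpha.length then 1
          else n - A.a - k + 1))^2) = (k-1) * 1 + (n - A.a - k + 1)^2 := by
      have step : ∑ i : Fin A.alpha.length,
          ((if (i : ℕ) + k < A.alpha.length then 0
            else if (i : ℕ) + 1 < A.alpha.length then 1
            else n - A.a - k + 1))^2
          = ∑ i : Fin A.alpha.length, (fun j => if j + k < A.alpha.length then 0
            else if j + 1 < A.alpha.length then 1
            else (n - A.a - k + 1)^2) ↑i := by
        apply Finset.sum_congr rfl
        intro i _
        simp only []
        split_ifs <;> norm_num
      rw [step, Fin.sum_univ_eq_sum_range (fun j => if j + k < A.alpha.length then 0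
        else if j + 1 < A.alpha.length then 1 else (n - A.a - k + 1)^2) A.alpha.length]
      exact tstar_sum _ _ hk1 hkl 1 ((n - A.a - k + 1)^2)
    have hsa : (∑ i : Fin A.alpha.length, A.alpha.get i *
        (((if (i : ℕ) + k < A.alpha.length then 0
          else if (i : ℕ) + 1 < A.alpha.length then 1
          else n - A.a - k + 1) : ℕ) : ℤ))
        = Tsum + A.alpha.getD (A.alpha.length - 1) 0 * ((n : ℤ) - A.a - k + 1) := by
      have step : ∑ i : Fin A.alpha.length, A.alpha.get i *
          (((if (i : ℕ) + k < A.alpha.length then 0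
            else if (i : ℕ) + 1 < A.alpha.length then 1
            else n - A.a - k + 1) : ℕ) : ℤ)
          = ∑ i : Fin A.alpha.length, (fun j => A.alpha.getD j 0 *
            (if j + k < A.alpha.length then 0
              else if j + 1 < A.alpha.length then 1
              else ((n - A.a - k + 1 : ℕ) : ℤ))) ↑i := by
        apply Finset.sum_congr rfl
        intro i _
        simp only []
        rw [get_eq_getD A i]
        split_ifs <;> push_cast <;> ring
      rw [step, Fin.sum_univ_eq_sum_range (fun j => A.alpha.getD j 0 *
        (if j + k < A.alpha.length then 0
          else if j + 1 < A.alpha.length then 1 else ((n - A.a - k + 1 : ℕ) : ℤ))) A.alpha.length]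
      rw [tstar_wsum _ _ hk1 hkl, ez1, mul_one]
    rw [Dform A H h n hn _ part2]
    rw [hsq, hsa, theta_eq A H h k hk1 hkl, last_eq_getD]
    rw [show ((((k-1) * 1 + (n - A.a - k + 1)^2 : ℕ)) : ℝ)
        = ((k:ℝ) - 1) + ((n:ℝ) - A.a - k + 1)^2 by
      push_cast [Nat.cast_sub hk1, Nat.cast_sub hkn, Nat.cast_sub hn]; ring]
    rw [er1]
    simp only [hTdef]
    push_cast
    ring
  refine ⟨?_, part2, part3, part4⟩
  -- part 1 : the lower bound
  intro t hsum hcard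
  classical
  set S := Finset.univ.filter (fun i => 0 < t i) with hSdef
  have hcards : S.card = k := hcard
  have h1pos : ∀ i ∈ S, 1 ≤ t i := fun i hi => (Finset.mem_filter.1 hi).2
  have htS : ∑ i ∈ S, t i = n - A.a := by
    rw [hSdef, Finset.sum_filter_of_ne (fun i _ hne => Nat.pos_of_ne_zero hne), hsum]
  have hxsum : ∑ i ∈ S, ((t i : ℝ)) = (n:ℝ) - A.a := by
    calc ∑ i ∈ S, ((t i : ℝ)) = ((∑ i ∈ S, t i : ℕ) : ℝ) := by push_cast; rfl
    _ = ((n - A.a : ℕ) : ℝ) := by rw [htS]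
    _ = (n:ℝ) - A.a := er1
  -- bound on the sum of squares
  have hSq : ((∑ i, (t i)^2 : ℕ) : ℝ) ≤ (((n:ℝ) - A.a) - k)^2 + 2*((n:ℝ) - A.a) - k := by
    have hsq1 : ((∑ i, (t i)^2 : ℕ) : ℝ) = ∑ i ∈ S, ((t i : ℝ))^2 := by
      push_cast
      rw [hSdef]
      exact (Finset.sum_filter_of_ne (fun i _ hne =>
        Nat.pos_of_ne_zero (fun h0 => hne (by simp [h0])))).symm
    have hone : ∀ i ∈ S, (0:ℝ) ≤ (t i : ℝ) - 1 := fun i hi => by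
      have := h1pos i hi
      have : (1:ℝ) ≤ (t i : ℝ) := by exact_mod_cast this
      linarith
    have h2 : ∑ i ∈ S, ((t i:ℝ) - 1) = ((n:ℝ) - A.a) - k := by
      rw [Finset.sum_sub_distrib, hxsum, Finset.sum_const, hcards]
      simp
    have h3 : ∑ i ∈ S, ((t i:ℝ) - 1)^2 ≤ (((n:ℝ) - A.a) - k)^2 := by
      rw [← h2]
      exact Finset.sum_sq_le_sq_sum_of_nonneg hone
    have h4 : ∑ i ∈ S, ((t i:ℝ))^2
        = ∑ i ∈ S, ((t i:ℝ) - 1)^2 + (2*(((n:ℝ) - A.a)) - k) := by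
      have e : ∀ i ∈ S, ((t i:ℝ))^2 = ((t i:ℝ)-1)^2 + (2*(t i:ℝ) - 1) := fun i _ => by ring
      rw [Finset.sum_congr rfl e, Finset.sum_add_distrib, Finset.sum_sub_distrib,
        ← Finset.mul_sum, hxsum, Finset.sum_const, hcards]
      simp [nsmul_eq_mul]
    rw [hsq1]
    linarith
  -- bound on the exponent sum
  have hlastget : A.alphaLast = A.alpha.get ⟨A.alpha.length - 1, by omega⟩ := by
    rw [QFactor.alphaLast, List.getLast_eq_getElem, List.get_eq_getElem]
  have hgetle : ∀ i : Fin A.alpha.length, A.alpha.get i ≤ A.alphaLast := by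
    intro i
    rw [hlastget]
    exact List.Pairwise.rel_get_of_le A.sorted (Fin.le_def.2 (by simp; omega))
  have hSa : (∑ i, A.alpha.get i * (t i : ℤ))
      ≤ A.alphaLast * (((n:ℤ) - A.a) - k + 1) + Tsum := by
    set β : Fin A.alpha.length → ℤ := fun i => A.alphaLast - A.alpha.get i with hβ
    have hb : ∀ i j : Fin A.alpha.length, i ≤ j → β j ≤ β i := by
      intro i j hij
      simp only [hβ]
      have := List.Pairwise.rel_get_of_le A.sorted hij
      linarith
    have hβ0 : ∀ i, 0 ≤ β i := fun i => by
      simp only [hβ]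
      have := hgetle i
      linarith
    have hstep1 : (∑ i, A.alpha.get i * (t i : ℤ)) = ∑ i ∈ S, A.alpha.get i * (t i : ℤ) := by
      rw [hSdef]
      exact (Finset.sum_filter_of_ne (fun i _ hne =>
        Nat.pos_of_ne_zero (fun h0 => hne (by simp [h0])))).symm
    have hstep2 : ∑ i ∈ S, A.alpha.get i * (t i : ℤ)
        ≤ ∑ i ∈ S, (A.alphaLast * (t i : ℤ) - β i) := by
      apply Finset.sum_le_sum
      intro i hi
      have h1 : (1:ℤ) ≤ (t i : ℤ) := by exact_mod_cast h1pos i hi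
      have hmul : β i * 1 ≤ β i * (t i:ℤ) := mul_le_mul_of_nonneg_left h1 (hβ0 i)
      have hexp : β i * (t i:ℤ) = A.alphaLast * (t i:ℤ) - A.alpha.get i * (t i:ℤ) := by
        simp only [hβ]
        ring
      rw [hexp] at hmul
      linarith
    have htSz : ∑ i ∈ S, ((t i : ℤ)) = (n:ℤ) - A.a := by
      calc ∑ i ∈ S, ((t i : ℤ)) = ((∑ i ∈ S, t i : ℕ) : ℤ) := by push_cast; rfl
      _ = ((n - A.a : ℕ) : ℤ) := by rw [htS]
      _ = (n:ℤ) - A.a := ez2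
    have hsum2 : ∑ i ∈ S, (A.alphaLast * (t i:ℤ) - β i)
        = A.alphaLast * ((n:ℤ) - A.a) - ∑ i ∈ S, β i := by
      rw [Finset.sum_sub_distrib, ← Finset.mul_sum, htSz]
    have hkey : ∑ i ∈ Finset.univ.filter
          (fun i : Fin A.alpha.length => A.alpha.length - k ≤ ↑i), β i
        ≤ ∑ i ∈ S, β i := key1 β hb S hcards hk1 hkl
    have hhighβ : ∑ i ∈ Finset.univ.filter
          (fun i : Fin A.alpha.length => A.alpha.length - k ≤ ↑i), β i
        = (k:ℤ) * A.alphaLast - (Tsum + A.alphaLast) := by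
      simp only [hβ]
      rw [Finset.sum_sub_distrib, Finset.sum_const, hhc, hhs, nsmul_eq_mul]
    rw [hstep1]
    calc ∑ i ∈ S, A.alpha.get i * (t i : ℤ)
        ≤ A.alphaLast * ((n:ℤ) - A.a) - ∑ i ∈ S, β i := by rw [← hsum2]; exact hstep2
      _ ≤ A.alphaLast * ((n:ℤ) - A.a) - ((k:ℤ) * A.alphaLast - (Tsum + A.alphaLast)) := by
          linarith [hkey, hhighβ]
      _ = A.alphaLast * (((n:ℤ) - A.a) - k + 1) + Tsum := by ring
  -- conclusion
  have hSaR : ((∑ i, A.alpha.get i * (t i : ℤ) : ℤ) : ℝ)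
      ≤ (A.alphaLast:ℝ) * (((n:ℝ) - A.a) - k + 1) + (Tsum:ℝ) := by
    push_cast
    exact_mod_cast hSa
  have hQ := mul_le_mul_of_nonneg_left hSq hH.le
  rw [Dform A H h n hn t hsum, theta_eq A H h k hk1 hkl, er1]
  have hid : (n:ℝ) * (2 * H * (A.a : ℝ) - (A.alphaLast : ℝ) + 2 * H * ((k : ℝ) - 1)) -
      (H*((A.a:ℝ)+(k:ℝ)-1)^2 + (H*h-(A.alphaLast:ℝ))*((A.a:ℝ)+(k:ℝ)-1)
        + ((k:ℝ)-1)*H*(1-h) + (Tsum : ℝ))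
      = H*n*((n:ℝ)-h) + H*h*((n:ℝ) - A.a)
        - H*((((n:ℝ) - A.a) - k)^2 + 2*((n:ℝ) - A.a) - k)
        - ((A.alphaLast:ℝ) * (((n:ℝ) - A.a) - k + 1) + (Tsum:ℝ)) := by
    ring
  simp only [hTdef] at hid hSaR hQ ⊢
  rw [hid]
  have h5 : H * ((∑ i, (t i)^2 : ℕ) : ℝ)
      ≤ H * ((((n:ℝ) - A.a) - k)^2 + 2*((n:ℝ) - A.a) - k) := hQ
  linarith
end

section
/- Let Q be a finite set of q-factors with Q₊ ≠ ∅, α(Q₀) = 0 and α(Q₊) > 0. Then there exist Θ > 0 and θ* ∈ ℝ such that: (i) for every A ∈ Q̂, every integer n ≥ a, and every ℓ-tuple (n₁,…,n_ℓ) of nonnegative integers with n₁+⋯+n_ℓ = n−a having at least two positive entries, D_A(n₁,…,n_ℓ) ≥ Θn − θ*; and (ii) for every A ∈ Q∖Q̂, every integer n ≥ a, and every ℓ-tuple of nonnegative integers with n₁+⋯+n_ℓ = n−a, D_A(n₁,…,n_ℓ) ≥ Θn − θ*. -/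
open scoped Classical
open PowerSeries Filter Topology

set_option linter.unusedSectionVars false
section auxlemmas

variable {ι : Type*} [Fintype ι] [DecidableEq ι]

lemma aux_sum_dseq (H : ℝ) (h : ℕ) (t : ι → ℕ) :
    ∑ i, dseq H h (t i) = H * (∑ i, ((t i : ℝ))^2) - H * h * (∑ i, (t i : ℝ)) := by
  rw [Finset.mul_sum, Finset.mul_sum, ← Finset.sum_sub_distrib]
  refine Finset.sum_congr rfl fun i _ => ?_
  simp only [dseq]; ring

lemma aux_get_le_last (A : QFactor) (i : Fin A.alpha.length) :
    A.alpha.get i ≤ A.alphaLast := by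
  rw [QFactor.alphaLast, List.getLast_eq_getElem]
  exact A.sorted.rel_get_of_le (by simp [Fin.le_def]; omega)

lemma aux_Dfun_eq (H : ℝ) (h : ℕ) (A : QFactor) (t : Fin A.alpha.length → ℕ) :
    Dfun H h A t =
      H * (((∑ i, (t i : ℝ)) + A.a)^2 - (∑ i, ((t i : ℝ))^2) - h * A.a)
        - ∑ i, ((A.alpha.get i : ℝ) * (t i : ℝ)) := by
  unfold Dfun
  rw [aux_sum_dseq]
  simp only [dseq]
  push_cast
  ring

lemma aux_sum_sq_le (t : ι → ℕ) :
    ∑ i, ((t i : ℝ))^2 ≤ (∑ i, (t i : ℝ))^2 := by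
  have hS : ∀ i, (t i : ℝ) ≤ ∑ j, (t j : ℝ) := fun i =>
    Finset.single_le_sum (f := fun j => (t j : ℝ)) (fun j _ => by positivity) (Finset.mem_univ i)
  calc ∑ i, ((t i : ℝ))^2 ≤ ∑ i, (t i : ℝ) * (∑ j, (t j : ℝ)) :=
        Finset.sum_le_sum fun i _ => by
          rw [sq]; exact mul_le_mul_of_nonneg_left (hS i) (by positivity)
    _ = (∑ i, (t i : ℝ))^2 := by rw [← Finset.sum_mul, sq]

lemma aux_sum_sq_le' (t : ι → ℕ)
    (hcard : 2 ≤ (Finset.univ.filter fun j => 0 < t j).card) :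
    ∑ i, ((t i : ℝ))^2 ≤ (∑ i, (t i : ℝ))^2 - (∑ i, (t i : ℝ)) := by
  obtain ⟨j, hj, k, hk, hjk⟩ := Finset.one_lt_card.mp hcard
  simp only [Finset.mem_filter, Finset.mem_univ, true_and] at hj hk
  have pair : ∀ i m : ι, i ≠ m → t i + t m ≤ ∑ x, t x := by
    intro i m him
    have h1 : ∑ x ∈ ({i, m} : Finset ι), t x ≤ ∑ x, t x :=
      Finset.sum_le_sum_of_subset (Finset.subset_univ _)
    rwa [Finset.sum_pair him] at h1
  have key : ∀ i, t i + 1 ≤ ∑ x, t x := by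
    intro i
    rcases eq_or_ne i j with rfl | hij
    · have := pair i k (by rintro rfl; exact hjk rfl)
      omega
    · have := pair i j hij
      omega
  have keyR : ∀ i, (t i : ℝ) ≤ (∑ x, (t x : ℝ)) - 1 := by
    intro i
    have := key i
    have : ((t i + 1 : ℕ) : ℝ) ≤ ((∑ x, t x : ℕ) : ℝ) := by exact_mod_cast this
    push_cast at this
    linarith
  calc ∑ i, ((t i : ℝ))^2 ≤ ∑ i, (t i : ℝ) * ((∑ x, (t x : ℝ)) - 1) :=
        Finset.sum_le_sum fun i _ => by
          rw [sq]; exact mul_le_mul_of_nonneg_left (keyR i) (by positivity)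
    _ = (∑ i, (t i : ℝ))^2 - (∑ i, (t i : ℝ)) := by rw [← Finset.sum_mul]; ring

lemma aux_estimate (H : ℝ) (hH0 : 0 ≤ H) (h : ℕ) (A : QFactor)
    (t : Fin A.alpha.length → ℕ)
    (E : ℝ) (hT : ∑ j, ((t j : ℝ))^2 ≤ (∑ j, (t j : ℝ))^2 - E) :
    H * (2 * A.a * (∑ j, (t j : ℝ)) + (A.a : ℝ)^2 + E - h * A.a)
      - (A.alphaLast : ℝ) * (∑ j, (t j : ℝ)) ≤ Dfun H h A t := by
  rw [aux_Dfun_eq]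
  have hC : ∑ j, ((A.alpha.get j : ℝ) * t j) ≤ (A.alphaLast : ℝ) * ∑ j, (t j : ℝ) := by
    rw [Finset.mul_sum]
    refine Finset.sum_le_sum fun j _ => mul_le_mul_of_nonneg_right ?_ (by positivity)
    exact_mod_cast aux_get_le_last A j
  set S := ∑ j, (t j : ℝ) with hS
  have h2 : 2 * A.a * S + (A.a : ℝ)^2 + E - h * A.a
      ≤ (S + A.a)^2 - (∑ j, ((t j : ℝ))^2) - h * A.a := by nlinarith [hT]
  have h3 := mul_le_mul_of_nonneg_left h2 hH0
  linarith

end auxlemmas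

/-- for a finite set Q of q-factors with Q₊ ≠ ∅, α(Q₀) = 0 and α(Q₊) > 0,
there are Θ > 0 and θ* such that D_A(n₁,…,n_ℓ) ≥ Θn − θ* for every A in the crest and every
tuple summing to n − a with at least two positive entries, and for every A not in the crest
and every tuple summing to n − a. -/
theorem stmt12 {N : ℕ} (Q : Fin N → QFactor)
    -- α(Q₀) = 0
    (hα0 : (∀ i, (Q i).a = 0 → (Q i).alphaLast ≤ 0) ∧ ∃ i, (Q i).a = 0 ∧ (Q i).alphaLast = 0)
    -- α(Q₊) > 0 (in particular Q₊ ≠ ∅)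
    (hαplus : ∃ i, 0 < (Q i).a ∧ 0 < (Q i).alphaLast)
    -- H is the height H(Q)
    (H : ℝ) (hH : IsGreatest {x : ℝ | ∃ i, 0 < (Q i).a ∧ x = (Q i).height} H)
    -- h is the co-height h(Q)
    (h : ℕ) (hh : IsLeast {m : ℕ | ∃ i, 0 < (Q i).a ∧
      2 * ((Q i).a : ℝ) * H = ((Q i).alphaLast : ℝ) ∧ (Q i).a = m} h) :
    ∃ Θ : ℝ, 0 < Θ ∧ ∃ θs : ℝ,
      (∀ i, 2 * ((Q i).a : ℝ) * H = ((Q i).alphaLast : ℝ) →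
        ∀ n : ℕ, (Q i).a ≤ n → ∀ t : Fin (Q i).alpha.length → ℕ,
          (∑ j, t j) = n - (Q i).a →
          2 ≤ (Finset.univ.filter fun j => 0 < t j).card →
          Θ * n - θs ≤ Dfun H h (Q i) t) ∧
      (∀ i, ¬(2 * ((Q i).a : ℝ) * H = ((Q i).alphaLast : ℝ)) →
        ∀ n : ℕ, (Q i).a ≤ n → ∀ t : Fin (Q i).alpha.length → ℕ,
          (∑ j, t j) = n - (Q i).a →
          Θ * n - θs ≤ Dfun H h (Q i) t) := by
    classical
  obtain ⟨i0, hi0a, hi0α⟩ := hαplus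
  have hH0 : 0 < H := by
    have h1 := hH.2 ⟨i0, hi0a, rfl⟩
    have h2 : (0:ℝ) < (Q i0).height := by
      unfold QFactor.height
      apply div_pos
      · exact_mod_cast hi0α
      · have : (0:ℝ) < ((Q i0).a : ℝ) := by exact_mod_cast hi0a
        linarith
    linarith
  have hαle : ∀ i, ((Q i).alphaLast : ℝ) ≤ 2 * (Q i).a * H := by
    intro i
    rcases Nat.eq_zero_or_pos (Q i).a with h0 | hpos
    · have h1 := hα0.1 i h0
      have h2 : ((Q i).alphaLast : ℝ) ≤ 0 := by exact_mod_cast h1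
      simp [h0]
      linarith
    · have h2 := hH.2 ⟨i, hpos, rfl⟩
      unfold QFactor.height at h2
      have h2a : (0:ℝ) < 2 * (Q i).a := by
        have : (0:ℝ) < ((Q i).a : ℝ) := by exact_mod_cast hpos
        linarith
      rw [div_le_iff₀ h2a] at h2
      linarith
  set Θi : Fin N → ℝ := fun i =>
    if 2 * ((Q i).a : ℝ) * H = ((Q i).alphaLast : ℝ) then H
    else if (Q i).a = 0 then 1 else 2 * (Q i).a * H - ((Q i).alphaLast : ℝ) with hΘi
  set θi : Fin N → ℝ := fun i =>
    (2 * (Q i).a * H - ((Q i).alphaLast : ℝ)) * (Q i).a + H * (Q i).a * (h + 1) with hθi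
  have hne : (Finset.univ : Finset (Fin N)).Nonempty := ⟨i0, Finset.mem_univ i0⟩
  refine ⟨Finset.univ.inf' hne Θi, ?_, Finset.univ.sup' hne θi, ?_, ?_⟩
  · rw [Finset.lt_inf'_iff]
    intro i _
    simp only [hΘi]
    split_ifs with h1 h2
    · exact hH0
    · norm_num
    · have := hαle i
      rcases lt_or_eq_of_le this with hlt | heq
      · linarith
      · exact absurd heq.symm h1
  -- crest case
  · intro i hcrest n hn t ht hcard
    have hΘle : Finset.univ.inf' hne Θi ≤ Θi i := Finset.inf'_le _ (Finset.mem_univ i)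
    have hθge : θi i ≤ Finset.univ.sup' hne θi := Finset.le_sup' _ (Finset.mem_univ i)
    have hnn : (∑ j, t j) + (Q i).a = n := by omega
    have hnR : (∑ j, (t j : ℝ)) + ((Q i).a : ℝ) = (n : ℝ) := by
      have h1 : (((∑ j, t j) + (Q i).a : ℕ) : ℝ) = (n : ℝ) := by exact_mod_cast hnn
      push_cast at h1
      linarith
    have hSnn : (0:ℝ) ≤ ∑ j, (t j : ℝ) := Finset.sum_nonneg fun j _ => by positivity
    have hann : (0:ℝ) ≤ ((Q i).a : ℝ) := by positivity
    have hhnn : (0:ℝ) ≤ (h : ℝ) := by positivity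
    have step1 : Finset.univ.inf' hne Θi * n - Finset.univ.sup' hne θi ≤ Θi i * n - θi i := by
      have : Finset.univ.inf' hne Θi * n ≤ Θi i * n :=
        mul_le_mul_of_nonneg_right hΘle (by positivity)
      linarith
    refine le_trans step1 ?_
    have hE := aux_sum_sq_le' t hcard
    have hbase := aux_estimate H hH0.le h (Q i) t (∑ j, (t j : ℝ)) hE
    refine le_trans ?_ hbase
    simp only [hΘi, hθi, if_pos hcrest]
    rw [← hcrest]
    nlinarith [mul_nonneg hH0.le (sq_nonneg ((Q i).a : ℝ)), hnR]
  -- non-crest case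
  · intro i hcrest n hn t ht
    have hΘle : Finset.univ.inf' hne Θi ≤ Θi i := Finset.inf'_le _ (Finset.mem_univ i)
    have hθge : θi i ≤ Finset.univ.sup' hne θi := Finset.le_sup' _ (Finset.mem_univ i)
    have hnn : (∑ j, t j) + (Q i).a = n := by omega
    have hnR : (∑ j, (t j : ℝ)) + ((Q i).a : ℝ) = (n : ℝ) := by
      have h1 : (((∑ j, t j) + (Q i).a : ℕ) : ℝ) = (n : ℝ) := by exact_mod_cast hnn
      push_cast at h1
      linarith
    have hSnn : (0:ℝ) ≤ ∑ j, (t j : ℝ) := Finset.sum_nonneg fun j _ => by positivity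
    have hann : (0:ℝ) ≤ ((Q i).a : ℝ) := by positivity
    have hhnn : (0:ℝ) ≤ (h : ℝ) := by positivity
    have step1 : Finset.univ.inf' hne Θi * n - Finset.univ.sup' hne θi ≤ Θi i * n - θi i := by
      have : Finset.univ.inf' hne Θi * n ≤ Θi i * n :=
        mul_le_mul_of_nonneg_right hΘle (by positivity)
      linarith
    refine le_trans step1 ?_
    have hE := aux_sum_sq_le t
    have hE0 : ∑ j, ((t j : ℝ))^2 ≤ (∑ j, (t j : ℝ))^2 - 0 := by linarith
    have hbase := aux_estimate H hH0.le h (Q i) t 0 hE0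
    refine le_trans ?_ hbase
    simp only [hΘi, hθi, if_neg hcrest]
    rcases Nat.eq_zero_or_pos (Q i).a with h0 | hpos
    · have hα1 : ((Q i).alphaLast : ℝ) ≤ -1 := by
        have h1 := hα0.1 i h0
        have h2 : (Q i).alphaLast ≠ 0 := by
          intro he
          apply hcrest
          rw [he, h0]
          norm_num
        have : (Q i).alphaLast ≤ -1 := by omega
        exact_mod_cast this
      rw [if_pos h0]
      simp only [h0, Nat.cast_zero] at hnR ⊢
      nlinarith [hSnn, hnR]
    · have ha0 : (Q i).a ≠ 0 := Nat.pos_iff_ne_zero.mp hpos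
      rw [if_neg ha0]
      have hδ : 0 < 2 * (Q i).a * H - ((Q i).alphaLast : ℝ) := by
        have := hαle i
        rcases lt_or_eq_of_le this with hlt | heq
        · linarith
        · exact absurd heq.symm hcrest
      nlinarith [mul_nonneg hH0.le (sq_nonneg ((Q i).a : ℝ)),
        mul_nonneg hH0.le hann, hnR, mul_nonneg hH0.le (mul_nonneg hann hhnn)]
end

section
/- Let q be real with q > 1 and let S₀ be a finite set of integers, each at least 2. Let f(z) = Σ_{n≥0} f_n zⁿ be the unique formal power series solution of f(z) = 1 + q z f(z) f(q²z) + Σ_{j∈S₀} q^{j(j−1)} z^j f(z) f(q²z) ⋯ f(q^{2(j−1)}z). Then there exists a real constant c > 0 such that lim_{n→∞} f_n q^{−n²} = c. -/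
open PowerSeries Filter Topology Finset

theorem rec0 {q : ℝ} {S₀ : Finset ℕ} {f : PowerSeries ℝ} (hS : ∀ j ∈ S₀, 2 ≤ j)
    (hf : f = 1 + PowerSeries.C q * PowerSeries.X *
            (f * PowerSeries.rescale (q ^ 2) f) +
          ∑ j ∈ S₀, PowerSeries.C (q ^ (j * (j - 1))) * PowerSeries.X ^ j *
            ∏ i ∈ Finset.range j, PowerSeries.rescale (q ^ (2 * i)) f) :
    PowerSeries.coeff 0 f = 1 := by
  conv_lhs => rw [hf]
  rw [map_add, map_add, map_sum]
  rw [coeff_one, if_pos rfl]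
  rw [mul_assoc, coeff_C_mul, PowerSeries.coeff_zero_eq_constantCoeff, map_mul,
    constantCoeff_X, zero_mul, mul_zero]
  rw [Finset.sum_eq_zero, add_zero, add_zero]
  intro j hj
  have h2 := hS j hj
  simp [zero_pow (show j ≠ 0 by omega)]

theorem recS {q : ℝ} {S₀ : Finset ℕ} {f : PowerSeries ℝ}
    (hf : f = 1 + PowerSeries.C q * PowerSeries.X *
            (f * PowerSeries.rescale (q ^ 2) f) +
          ∑ j ∈ S₀, PowerSeries.C (q ^ (j * (j - 1))) * PowerSeries.X ^ j *
            ∏ i ∈ Finset.range j, PowerSeries.rescale (q ^ (2 * i)) f) (n : ℕ) :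
    PowerSeries.coeff (n+1) f
      = q * ∑ p ∈ Finset.HasAntidiagonal.antidiagonal n,
          PowerSeries.coeff p.1 f * ((q^2)^p.2 * PowerSeries.coeff p.2 f)
      + ∑ j ∈ S₀, (if j ≤ n+1 then q^(j*(j-1)) *
          ∑ l ∈ Finset.finsuppAntidiag (Finset.range j) (n+1-j),
            ∏ i ∈ Finset.range j, ((q^(2*i))^(l i) * PowerSeries.coeff (l i) f) else 0) := by
  conv_lhs => rw [hf]
  rw [map_add, map_add, map_sum]
  rw [coeff_one, if_neg (Nat.succ_ne_zero n), zero_add]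
  congr 1
  · rw [mul_assoc, coeff_C_mul, coeff_succ_X_mul, PowerSeries.coeff_mul]
    simp only [coeff_rescale]
  · refine Finset.sum_congr rfl fun j hj => ?_
    rw [mul_assoc, coeff_C_mul, coeff_X_pow_mul', mul_ite, mul_zero, PowerSeries.coeff_prod]
    simp only [coeff_rescale]

theorem lmem' {j m : ℕ} {l : ℕ →₀ ℕ} (hl : l ∈ Finset.finsuppAntidiag (Finset.range j) m)
    {i : ℕ} (hi : i ∈ Finset.range j) : l i ≤ m := by
  rw [Finset.mem_finsuppAntidiag] at hl
  calc l i ≤ (Finset.range j).sum l :=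
        Finset.single_le_sum (fun i _ => Nat.zero_le _) hi
    _ = m := hl.1

theorem cardFA (j m : ℕ) : (Finset.finsuppAntidiag (Finset.range j) m).card ≤ (m+1)^j := by
  have h : (Finset.finsuppAntidiag (Finset.range j) m).card
      ≤ ((Finset.range j).pi (fun _ => Finset.range (m+1))).card := by
    apply Finset.card_le_card_of_injOn (fun l => fun i _ => l i)
    · intro l hl
      rw [Finset.mem_coe, Finset.mem_pi]
      intro i hi
      rw [Finset.mem_range]
      exact Nat.lt_succ_of_le (lmem' hl hi)
    · intro l1 h1 l2 h2 h
      rw [Finset.mem_coe, Finset.mem_finsuppAntidiag] at h1 h2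
      apply Finsupp.ext
      intro i
      by_cases hi : i ∈ Finset.range j
      · exact congrFun (congrFun h i) hi
      · have e1 : l1 i = 0 := Finsupp.notMem_support_iff.mp (fun hc => hi (h1.2 hc))
        have e2 : l2 i = 0 := Finsupp.notMem_support_iff.mp (fun hc => hi (h2.2 hc))
        rw [e1, e2]
  rwa [Finset.card_pi, Finset.prod_const, Finset.card_range, Finset.card_range] at h

theorem expo1 {u v n : ℕ} (huv : u + v = n) (hu : 1 ≤ u) :
    u*u + v*v + 2*v + 1 ≤ n*n + 1 := by nlinarith

theorem expo2 {J j m n : ℕ} (h2 : 2 ≤ j) (hjJ : j ≤ J) (hmn : n + 1 = m + j)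
    (l : ℕ →₀ ℕ) (hsum : ∑ i ∈ Finset.range j, l i = m) :
    j*(j-1) + (∑ i ∈ Finset.range j, (2*i*(l i) + l i * l i)) ≤ n*n + 1 + J := by
  have hS1a : (∑ i ∈ Finset.range j, l i * l i) ≤ ∑ i ∈ Finset.range j, l i * m :=
    Finset.sum_le_sum fun i hi => Nat.mul_le_mul_left _
      (hsum ▸ Finset.single_le_sum (fun i _ => Nat.zero_le _) hi)
  have hS1b : (∑ i ∈ Finset.range j, l i * m) = m * m := by rw [← Finset.sum_mul, hsum]
  have hS2a : (∑ i ∈ Finset.range j, 2*i*(l i)) ≤ ∑ i ∈ Finset.range j, 2*(j-1)*(l i) :=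
    Finset.sum_le_sum fun i hi => Nat.mul_le_mul_right _
      (Nat.mul_le_mul_left _ (by have := Finset.mem_range.mp hi; omega))
  have hS2b : (∑ i ∈ Finset.range j, 2*(j-1)*(l i)) = 2*(j-1)*m := by
    rw [← Finset.mul_sum, hsum]
  have hsplit : (∑ i ∈ Finset.range j, (2*i*(l i) + l i * l i))
      = (∑ i ∈ Finset.range j, 2*i*(l i)) + ∑ i ∈ Finset.range j, l i * l i :=
    Finset.sum_add_distrib
  obtain ⟨k, hk, hn⟩ : ∃ k, j = k + 1 ∧ n = m + k := ⟨j - 1, by omega, by omega⟩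
  subst hk hn
  simp only [Nat.add_sub_cancel] at *
  nlinarith [hS1a, hS1b, hS2a, hS2b, hsplit]

section
variable {q : ℝ} {S₀ : Finset ℕ} {f : PowerSeries ℝ}

theorem lmem {j m : ℕ} {l : ℕ →₀ ℕ} (hl : l ∈ Finset.finsuppAntidiag (Finset.range j) m)
    {i : ℕ} (hi : i ∈ Finset.range j) : l i ≤ m := by
  rw [Finset.mem_finsuppAntidiag] at hl
  calc l i ≤ (Finset.range j).sum l :=
        Finset.single_le_sum (fun i _ => Nat.zero_le _) hi
    _ = m := hl.1

theorem pos (hq : 1 < q) (hS : ∀ j ∈ S₀, 2 ≤ j)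
    (hf : f = 1 + PowerSeries.C q * PowerSeries.X *
            (f * PowerSeries.rescale (q ^ 2) f) +
          ∑ j ∈ S₀, PowerSeries.C (q ^ (j * (j - 1))) * PowerSeries.X ^ j *
            ∏ i ∈ Finset.range j, PowerSeries.rescale (q ^ (2 * i)) f) :
    ∀ n, 0 ≤ PowerSeries.coeff n f := by
  have q0 : (0:ℝ) ≤ q := le_of_lt (lt_trans one_pos hq)
  intro n
  induction n using Nat.strong_induction_on with
  | _ n ih =>
    match n with
    | 0 => rw [rec0 hS hf]; norm_num
    | Nat.succ m =>
      rw [recS hf m]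
      apply add_nonneg
      · apply mul_nonneg q0
        apply Finset.sum_nonneg
        intro p hp
        rw [Finset.HasAntidiagonal.mem_antidiagonal] at hp
        exact mul_nonneg (ih p.1 (by omega)) (mul_nonneg (pow_nonneg (sq_nonneg q) _)
          (ih p.2 (by omega)))
      · apply Finset.sum_nonneg
        intro j hj
        have h2 := hS j hj
        split
        case isTrue h =>
          apply mul_nonneg (pow_nonneg q0 _)
          apply Finset.sum_nonneg
          intro l hl
          apply Finset.prod_nonneg
          intro i hi
          have hli := lmem hl hi
          exact mul_nonneg (pow_nonneg (pow_nonneg q0 _) _) (ih (l i) (by omega))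
        case isFalse h => exact le_refl 0

theorem low (hq : 1 < q) (hS : ∀ j ∈ S₀, 2 ≤ j)
    (hf : f = 1 + PowerSeries.C q * PowerSeries.X *
            (f * PowerSeries.rescale (q ^ 2) f) +
          ∑ j ∈ S₀, PowerSeries.C (q ^ (j * (j - 1))) * PowerSeries.X ^ j *
            ∏ i ∈ Finset.range j, PowerSeries.rescale (q ^ (2 * i)) f) :
    ∀ n, PowerSeries.coeff n f * q^(2*n+1) ≤ PowerSeries.coeff (n+1) f := by
  have q0 : (0:ℝ) < q := lt_trans one_pos hq
  have hpos := pos hq hS hf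
  intro n
  rw [recS hf n]
  have h1 : PowerSeries.coeff 0 f * ((q^2)^n * PowerSeries.coeff n f)
      ≤ ∑ p ∈ Finset.HasAntidiagonal.antidiagonal n,
          PowerSeries.coeff p.1 f * ((q^2)^p.2 * PowerSeries.coeff p.2 f) := by
    exact Finset.single_le_sum (f := fun p : ℕ × ℕ =>
      PowerSeries.coeff p.1 f * ((q^2)^p.2 * PowerSeries.coeff p.2 f))
      (fun p _ => mul_nonneg (hpos p.1) (mul_nonneg (pow_nonneg (sq_nonneg q) _) (hpos p.2)))
      (show ((0:ℕ), n) ∈ Finset.HasAntidiagonal.antidiagonal n by simp)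
  have h2 : (0:ℝ) ≤ ∑ j ∈ S₀, (if j ≤ n+1 then q^(j*(j-1)) *
          ∑ l ∈ Finset.finsuppAntidiag (Finset.range j) (n+1-j),
            ∏ i ∈ Finset.range j, ((q^(2*i))^(l i) * PowerSeries.coeff (l i) f) else 0) := by
    apply Finset.sum_nonneg
    intro j hj
    split
    · apply mul_nonneg (pow_nonneg q0.le _)
      apply Finset.sum_nonneg
      intro l hl
      exact Finset.prod_nonneg fun i hi =>
        mul_nonneg (pow_nonneg (pow_nonneg q0.le _) _) (hpos (l i))
    · exact le_refl 0
  have h3 : PowerSeries.coeff n f * q^(2*n+1)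
      = q * (PowerSeries.coeff 0 f * ((q^2)^n * PowerSeries.coeff n f)) := by
    rw [rec0 hS hf, one_mul, ← pow_mul]
    ring
  rw [h3]
  have := mul_le_mul_of_nonneg_left h1 q0.le
  linarith
end

section
variable {q : ℝ} {S₀ : Finset ℕ} {f : PowerSeries ℝ}

theorem up (hq : 1 < q) (hS : ∀ j ∈ S₀, 2 ≤ j)
    (hf : f = 1 + PowerSeries.C q * PowerSeries.X *
            (f * PowerSeries.rescale (q ^ 2) f) +
          ∑ j ∈ S₀, PowerSeries.C (q ^ (j * (j - 1))) * PowerSeries.X ^ j *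
            ∏ i ∈ Finset.range j, PowerSeries.rescale (q ^ (2 * i)) f)
    {J : ℕ} (hJ2 : 2 ≤ J) (hJ : ∀ j ∈ S₀, j ≤ J)
    {A D : ℝ} (hA : 1 ≤ A) (hD : 1 ≤ D) (n : ℕ)
    (hbd : ∀ k, k ≤ n → PowerSeries.coeff k f ≤ A * D^k * q^(k*k)) :
    PowerSeries.coeff (n+1) f ≤ PowerSeries.coeff n f * q^(2*n+1)
      + ((S₀.card : ℝ) + 1) * (q^J * A^J * ((n:ℝ)+2)^J * D^n * q^(n*n+1)) := by
  have q0 : (0:ℝ) < q := lt_trans one_pos hq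
  have q1 : (1:ℝ) ≤ q := hq.le
  have A0 : (0:ℝ) ≤ A := le_trans zero_le_one hA
  have D0 : (0:ℝ) ≤ D := le_trans zero_le_one hD
  have hpos := pos hq hS hf
  set X : ℝ := q^J * A^J * ((n:ℝ)+2)^J * D^n * q^(n*n+1) with hX
  have hX0 : 0 ≤ X := by positivity
  have hn2 : (0:ℝ) ≤ (n:ℝ) + 2 := by positivity
  rw [recS hf n]
  -- the convolution part
  have hconv : q * ∑ p ∈ Finset.HasAntidiagonal.antidiagonal n,
      PowerSeries.coeff p.1 f * ((q^2)^p.2 * PowerSeries.coeff p.2 f)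
      ≤ PowerSeries.coeff n f * q^(2*n+1) + X := by
    have hmem0 : ((0:ℕ), n) ∈ Finset.HasAntidiagonal.antidiagonal n := by simp
    rw [← Finset.add_sum_erase _ _ hmem0]
    have hmain : q * (PowerSeries.coeff (0,n).1 f *
        ((q^2)^(0,n).2 * PowerSeries.coeff (0,n).2 f))
        = PowerSeries.coeff n f * q^(2*n+1) := by
      show q * (PowerSeries.coeff 0 f * ((q^2)^n * PowerSeries.coeff n f)) = _
      rw [rec0 hS hf, one_mul, ← pow_mul, pow_succ]
      ring
    have herase : ∀ p ∈ (Finset.HasAntidiagonal.antidiagonal n).erase ((0:ℕ),n),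
        PowerSeries.coeff p.1 f * ((q^2)^p.2 * PowerSeries.coeff p.2 f)
          ≤ A^2 * D^n * q^(n*n) := by
      rintro ⟨u,v⟩ hp
      obtain ⟨hne, hmem⟩ := Finset.mem_erase.mp hp
      rw [Finset.HasAntidiagonal.mem_antidiagonal] at hmem
      dsimp only at hmem
      have hu : 1 ≤ u := by
        rcases Nat.eq_zero_or_pos u with h | h
        · exact absurd (by simp [h, ← hmem]) hne
        · exact h
      have h1 : PowerSeries.coeff u f ≤ A * D^u * q^(u*u) := hbd u (by omega)
      have h2 : PowerSeries.coeff v f ≤ A * D^v * q^(v*v) := hbd v (by omega)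
      have step : PowerSeries.coeff u f * ((q^2)^v * PowerSeries.coeff v f)
          ≤ (A * D^u * q^(u*u)) * ((q^2)^v * (A * D^v * q^(v*v))) := by
        apply mul_le_mul h1 _ (mul_nonneg (by positivity) (hpos v)) (by positivity)
        exact mul_le_mul_of_nonneg_left h2 (by positivity)
      refine le_trans step ?_
      have heq : (A * D^u * q^(u*u)) * ((q^2)^v * (A * D^v * q^(v*v)))
          = A^2 * (D^u * D^v) * q^(u*u + v*v + 2*v) := by
        rw [← pow_mul, pow_add, pow_add]
        ring
      rw [heq, ← pow_add, hmem]
      have hexp : u*u + v*v + 2*v ≤ n*n := by have := expo1 hmem hu; omega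
      have hq1 : q^(u*u + v*v + 2*v) ≤ q^(n*n) := pow_le_pow_right₀ q1 hexp
      exact mul_le_mul_of_nonneg_left hq1 (by positivity)
    have hsum : ∑ p ∈ (Finset.HasAntidiagonal.antidiagonal n).erase ((0:ℕ),n),
        PowerSeries.coeff p.1 f * ((q^2)^p.2 * PowerSeries.coeff p.2 f)
        ≤ (n:ℝ) * (A^2 * D^n * q^(n*n)) := by
      have := Finset.sum_le_card_nsmul _ _ _ herase
      rwa [Finset.card_erase_of_mem hmem0, Finset.Nat.card_antidiagonal,
        Nat.add_sub_cancel, nsmul_eq_mul] at this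
    rw [mul_add, hmain]
    apply add_le_add_right
    have h3 : q * ∑ p ∈ (Finset.HasAntidiagonal.antidiagonal n).erase ((0:ℕ),n),
        PowerSeries.coeff p.1 f * ((q^2)^p.2 * PowerSeries.coeff p.2 f)
        ≤ q * ((n:ℝ) * (A^2 * D^n * q^(n*n))) := by
      apply mul_le_mul_of_nonneg_left hsum q0.le
    refine le_trans h3 ?_
    have e1 : q * ((n:ℝ) * (A^2 * D^n * q^(n*n))) = (n:ℝ) * A^2 * D^n * q^(n*n+1) := by
      rw [pow_succ]; ring
    rw [e1, hX]
    have b1 : (n:ℝ) ≤ ((n:ℝ)+2)^J :=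
      le_trans (by linarith) (le_self_pow₀ (by linarith) (by omega))
    have b2 : A^2 ≤ A^J := pow_le_pow_right₀ hA hJ2
    have b3 : (1:ℝ) ≤ q^J := one_le_pow₀ q1
    calc (n:ℝ) * A^2 * D^n * q^(n*n+1)
        ≤ (((n:ℝ)+2)^J * A^J) * D^n * q^(n*n+1) := by
          apply mul_le_mul_of_nonneg_right _ (by positivity)
          apply mul_le_mul_of_nonneg_right _ (by positivity)
          exact mul_le_mul b1 b2 (by positivity) (by positivity)
      _ ≤ q^J * A^J * ((n:ℝ)+2)^J * D^n * q^(n*n+1) := by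
          nlinarith [pow_nonneg A0 J, pow_nonneg hn2 J, pow_nonneg D0 n,
            pow_nonneg q0.le (n*n+1), pow_nonneg q0.le J,
            mul_nonneg (mul_nonneg (pow_nonneg hn2 J) (pow_nonneg A0 J))
              (mul_nonneg (pow_nonneg D0 n) (pow_nonneg q0.le (n*n+1)))]
  -- the j part
  have hjpart : ∀ j ∈ S₀, (if j ≤ n+1 then q^(j*(j-1)) *
      ∑ l ∈ Finset.finsuppAntidiag (Finset.range j) (n+1-j),
        ∏ i ∈ Finset.range j, ((q^(2*i))^(l i) * PowerSeries.coeff (l i) f) else 0) ≤ X := by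
    intro j hj
    split
    case isFalse => exact hX0
    case isTrue hjn =>
      have hj2 := hS j hj
      have hjJ := hJ j hj
      set m : ℕ := n + 1 - j with hm
      have hmn : n + 1 = m + j := by omega
      have hmln : m ≤ n := by omega
      -- per-l bound
      have hperl : ∀ l ∈ Finset.finsuppAntidiag (Finset.range j) m,
          q^(j*(j-1)) * ∏ i ∈ Finset.range j, ((q^(2*i))^(l i) * PowerSeries.coeff (l i) f)
          ≤ A^J * D^n * (q^(n*n+1) * q^J) := by
        intro l hl
        have hsum : ∑ i ∈ Finset.range j, l i = m := by
          have := (Finset.mem_finsuppAntidiag.mp hl).1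
          simpa [Finset.sum] using this
        have step1 : ∏ i ∈ Finset.range j, ((q^(2*i))^(l i) * PowerSeries.coeff (l i) f)
            ≤ ∏ i ∈ Finset.range j, ((q^(2*i))^(l i) * (A * D^(l i) * q^(l i * l i))) := by
          apply Finset.prod_le_prod
          · intro i hi
            exact mul_nonneg (by positivity) (hpos (l i))
          · intro i hi
            exact mul_le_mul_of_nonneg_left (hbd (l i) (le_trans (lmem' hl hi) hmln))
              (by positivity)
        have step2 : ∏ i ∈ Finset.range j, ((q^(2*i))^(l i) * (A * D^(l i) * q^(l i * l i)))
            = A^j * D^m * q^(∑ i ∈ Finset.range j, (2*i*(l i) + l i * l i)) := by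
          have e : ∀ i, (q^(2*i))^(l i) * (A * D^(l i) * q^(l i * l i))
              = A * (D^(l i) * q^(2*i*(l i) + l i * l i)) := by
            intro i
            rw [← pow_mul, pow_add]
            ring
          rw [Finset.prod_congr rfl (fun i _ => e i), Finset.prod_mul_distrib,
            Finset.prod_const, Finset.card_range, Finset.prod_mul_distrib,
            Finset.prod_pow_eq_pow_sum, Finset.prod_pow_eq_pow_sum, hsum]
          ring
        have step3 : q^(j*(j-1)) * (A^j * D^m *
              q^(∑ i ∈ Finset.range j, (2*i*(l i) + l i * l i)))
            ≤ A^J * D^n * (q^(n*n+1) * q^J) := by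
          have e2 : q^(j*(j-1)) * (A^j * D^m *
              q^(∑ i ∈ Finset.range j, (2*i*(l i) + l i * l i)))
              = A^j * D^m * q^(j*(j-1) + ∑ i ∈ Finset.range j, (2*i*(l i) + l i * l i)) := by
            rw [pow_add]; ring
          rw [e2, ← pow_add]
          have hexp := expo2 hj2 hjJ hmn l hsum
          have hqe : q^(j*(j-1) + ∑ i ∈ Finset.range j, (2*i*(l i) + l i * l i))
              ≤ q^(n*n+1+J) := pow_le_pow_right₀ q1 hexp
          calc A^j * D^m * q^(j*(j-1) + ∑ i ∈ Finset.range j, (2*i*(l i) + l i * l i))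
              ≤ A^j * D^m * q^(n*n+1+J) := by
                exact mul_le_mul_of_nonneg_left hqe (by positivity)
            _ ≤ A^J * D^n * q^(n*n+1+J) := by
                apply mul_le_mul_of_nonneg_right _ (by positivity)
                exact mul_le_mul (pow_le_pow_right₀ hA hjJ) (pow_le_pow_right₀ hD hmln)
                  (by positivity) (by positivity)
        calc q^(j*(j-1)) * ∏ i ∈ Finset.range j, ((q^(2*i))^(l i) * PowerSeries.coeff (l i) f)
            ≤ q^(j*(j-1)) * ∏ i ∈ Finset.range j, ((q^(2*i))^(l i) * (A * D^(l i) * q^(l i * l i))) :=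
              mul_le_mul_of_nonneg_left step1 (by positivity)
          _ = q^(j*(j-1)) * (A^j * D^m * q^(∑ i ∈ Finset.range j, (2*i*(l i) + l i * l i))) := by
              rw [step2]
          _ ≤ A^J * D^n * (q^(n*n+1) * q^J) := by rw [← pow_add] at step3 ⊢; exact step3
      -- sum over l
      have hcard : ((Finset.finsuppAntidiag (Finset.range j) m).card : ℝ) ≤ ((n:ℝ)+2)^J := by
        have h1 : ((Finset.finsuppAntidiag (Finset.range j) m).card : ℝ) ≤ ((m+1:ℕ):ℝ)^j := by
          have := cardFA j m
          exact_mod_cast Nat.cast_le.mpr (by exact_mod_cast this)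
        refine le_trans h1 ?_
        have h2 : ((m+1:ℕ):ℝ) ≤ (n:ℝ)+2 := by
          push_cast
          have := (Nat.cast_le (α := ℝ)).mpr hmln
          linarith
        calc ((m+1:ℕ):ℝ)^j ≤ ((n:ℝ)+2)^j := pow_le_pow_left₀ (by positivity) h2 j
          _ ≤ ((n:ℝ)+2)^J := pow_le_pow_right₀ (by have h3 : (0:ℝ) ≤ (n:ℝ) := Nat.cast_nonneg n; linarith) hjJ
      have hsuml : q^(j*(j-1)) *
          ∑ l ∈ Finset.finsuppAntidiag (Finset.range j) m,
            ∏ i ∈ Finset.range j, ((q^(2*i))^(l i) * PowerSeries.coeff (l i) f)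
          ≤ ((Finset.finsuppAntidiag (Finset.range j) m).card : ℝ)
            * (A^J * D^n * (q^(n*n+1) * q^J)) := by
        rw [Finset.mul_sum]
        have := Finset.sum_le_card_nsmul (Finset.finsuppAntidiag (Finset.range j) m)
          _ _ hperl
        rwa [nsmul_eq_mul] at this
      refine le_trans hsuml ?_
      rw [hX]
      calc ((Finset.finsuppAntidiag (Finset.range j) m).card : ℝ)
            * (A^J * D^n * (q^(n*n+1) * q^J))
          ≤ ((n:ℝ)+2)^J * (A^J * D^n * (q^(n*n+1) * q^J)) :=
            mul_le_mul_of_nonneg_right hcard (by positivity)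
        _ = q^J * A^J * ((n:ℝ)+2)^J * D^n * q^(n*n+1) := by ring
  have hjsum : ∑ j ∈ S₀, (if j ≤ n+1 then q^(j*(j-1)) *
      ∑ l ∈ Finset.finsuppAntidiag (Finset.range j) (n+1-j),
        ∏ i ∈ Finset.range j, ((q^(2*i))^(l i) * PowerSeries.coeff (l i) f) else 0)
      ≤ (S₀.card : ℝ) * X := by
    have := Finset.sum_le_card_nsmul S₀ _ _ hjpart
    rwa [nsmul_eq_mul] at this
  calc q * (∑ p ∈ Finset.HasAntidiagonal.antidiagonal n,
          PowerSeries.coeff p.1 f * ((q^2)^p.2 * PowerSeries.coeff p.2 f))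
        + ∑ j ∈ S₀, (if j ≤ n+1 then q^(j*(j-1)) *
          ∑ l ∈ Finset.finsuppAntidiag (Finset.range j) (n+1-j),
            ∏ i ∈ Finset.range j, ((q^(2*i))^(l i) * PowerSeries.coeff (l i) f) else 0)
      ≤ (PowerSeries.coeff n f * q^(2*n+1) + X) + (S₀.card : ℝ) * X :=
        add_le_add hconv hjsum
    _ = PowerSeries.coeff n f * q^(2*n+1)
        + ((S₀.card : ℝ) + 1) * (q^J * A^J * ((n:ℝ)+2)^J * D^n * q^(n*n+1)) := by
        rw [hX]; ring
end

theorem seq_main {q : ℝ} (hq : 1 < q) {a : ℕ → ℝ} {C₀ : ℝ} {J : ℕ} (hC₀ : 1 ≤ C₀) (hJ : 2 ≤ J)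
    (h0 : a 0 = 1) (hpos : ∀ n, 0 ≤ a n)
    (hlow : ∀ n : ℕ, a n * q^(2*n+1) ≤ a (n+1))
    (hup : ∀ A D : ℝ, 1 ≤ A → 1 ≤ D → ∀ n : ℕ, (∀ k, k ≤ n → a k ≤ A * D^k * q^(k*k)) →
      a (n+1) ≤ a n * q^(2*n+1) + C₀ * A^J * ((n:ℝ)+2)^J * D^n * q^(n*n+1)) :
    ∃ c : ℝ, 0 < c ∧ Tendsto (fun n => a n / q^(n*n)) atTop (𝓝 c) := by
  have q0 : (0:ℝ) < q := lt_trans one_pos hq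
  have q1 : (1:ℝ) ≤ q := hq.le
  set G : ℕ → ℝ := fun n => a n / q^(n*n) with hG
  have hG0 : G 0 = 1 := by simp [hG, h0]
  have hGpos : ∀ n, 0 ≤ G n := fun n => div_nonneg (hpos n) (by positivity)
  have hmonostep : ∀ n, G n ≤ G (n+1) := by
    intro n
    show a n / q^(n*n) ≤ a (n+1) / q^((n+1)*(n+1))
    rw [div_le_div_iff₀ (by positivity) (by positivity)]
    have e1 : (n+1)*(n+1) = (n*n) + (2*n+1) := by ring
    calc a n * q^((n+1)*(n+1)) = (a n * q^(2*n+1)) * q^(n*n) := by rw [e1, pow_add]; ring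
      _ ≤ a (n+1) * q^(n*n) := mul_le_mul_of_nonneg_right (hlow n) (by positivity)
  have hmono : Monotone G := monotone_nat_of_le_succ hmonostep
  have hG1 : ∀ n, 1 ≤ G n := fun n => hG0 ▸ hmono (Nat.zero_le n)
  -- upper recurrence at G level
  have hupG : ∀ A D : ℝ, 1 ≤ A → 1 ≤ D → ∀ n : ℕ, (∀ k, k ≤ n → G k ≤ A * D^k) →
      G (n+1) ≤ G n + C₀ * A^J * ((n:ℝ)+2)^J * D^n / q^(2*n) := by
    intro A D hA hD n hall
    have hbd : ∀ k, k ≤ n → a k ≤ A * D^k * q^(k*k) := by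
      intro k hk
      have h2 : a k / q^(k*k) ≤ A * D^k := hall k hk
      rw [div_le_iff₀ (by positivity)] at h2
      linarith
    have h := hup A D hA hD n hbd
    set W : ℝ := C₀ * A^J * ((n:ℝ)+2)^J * D^n with hW
    show a (n+1) / q^((n+1)*(n+1)) ≤ a n / q^(n*n) + W / q^(2*n)
    have e1 : (n+1)*(n+1) = (n*n) + (2*n+1) := by ring
    have hstep : a (n+1) / q^((n+1)*(n+1))
        ≤ (a n * q^(2*n+1) + W * q^(n*n+1)) / q^((n+1)*(n+1)) := by gcongr
    refine le_trans hstep (le_of_eq ?_)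
    rw [e1, pow_add, pow_succ, pow_succ]
    have hu : q^(n*n) ≠ 0 := by positivity
    have hv : q^(2*n) ≠ 0 := by positivity
    field_simp
    ring
  -- telescoping
  have telesc : ∀ A D : ℝ, 1 ≤ A → 1 ≤ D → (∀ n, G n ≤ A * D^n) → ∀ n : ℕ,
      G n ≤ 1 + ∑ k ∈ Finset.range n, C₀ * A^J * ((k:ℝ)+2)^J * D^k / q^(2*k) := by
    intro A D hA hD hall n
    induction n with
    | zero => simp [hG0]
    | succ n ih =>
      have h := hupG A D hA hD n (fun k _ => hall k)
      rw [Finset.sum_range_succ]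
      linarith
  -- uniform bounds for (n+2)^J * r^n
  have hK : ∀ r : ℝ, 0 < r → r < 1 → ∃ K : ℝ, 0 ≤ K ∧ ∀ n : ℕ, ((n:ℝ)+2)^J * r^n ≤ K := by
    intro r hr0 hr1
    have t0 : Tendsto (fun n : ℕ => (n:ℝ)^J * r^n) atTop (𝓝 0) :=
      tendsto_pow_const_mul_const_pow_of_lt_one J hr0.le hr1
    have t2 : Tendsto (fun n : ℕ => ((n:ℝ)+2)^J * r^(n+2)) atTop (𝓝 0) := by
      have h := t0.comp (tendsto_add_atTop_nat 2)
      have e : (fun n : ℕ => ((n:ℝ)+2)^J * r^(n+2))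
          = (fun n : ℕ => (n:ℝ)^J * r^n) ∘ (fun n => n + 2) := by
        funext n
        simp only [Function.comp_apply]
        push_cast
        ring
      rw [e]
      exact h
    have t3 : Tendsto (fun n : ℕ => ((n:ℝ)+2)^J * r^n) atTop (𝓝 0) := by
      have e : (fun n : ℕ => ((n:ℝ)+2)^J * r^n)
          = fun n : ℕ => (((n:ℝ)+2)^J * r^(n+2)) * (r^2)⁻¹ := by
        funext n
        have hr : r ≠ 0 := ne_of_gt hr0
        rw [pow_add]
        field_simp
      rw [e]
      simpa using t2.mul_const ((r^2)⁻¹)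
    obtain ⟨K, hKub⟩ := t3.bddAbove_range
    rw [mem_upperBounds] at hKub
    refine ⟨K, ?_, fun n => hKub _ (Set.mem_range_self n)⟩
    exact le_trans (by positivity : (0:ℝ) ≤ (((0:ℕ):ℝ)+2)^J * r^0) (hKub _ (Set.mem_range_self 0))
  -- Stage 1: a priori exponential bound
  have hq2 : (1:ℝ) < q^2 := by nlinarith
  obtain ⟨K1, hK10, hK1⟩ := hK ((q^2)⁻¹) (by positivity)
    (by rw [inv_lt_one₀ (by positivity)]; exact hq2)
  set D₀ : ℝ := max q (1 + C₀ * K1) with hD₀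
  have hD₀q : q ≤ D₀ := le_max_left _ _
  have hD₀1 : 1 ≤ D₀ := le_trans q1 hD₀q
  have hD₀C : 1 + C₀ * K1 ≤ D₀ := le_max_right _ _
  have claim1 : ∀ n, G n ≤ D₀^n := by
    intro n
    induction n using Nat.strong_induction_on with
    | _ n ih =>
      match n with
      | 0 => rw [hG0, pow_zero]
      | Nat.succ m =>
        have hall : ∀ k, k ≤ m → G k ≤ 1 * D₀^k := fun k hk => by
          rw [one_mul]; exact ih k (by omega)
        have h := hupG 1 D₀ le_rfl hD₀1 m hall
        have ecor : C₀ * 1^J * ((m:ℝ)+2)^J * D₀^m / q^(2*m)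
            = (C₀ * (((m:ℝ)+2)^J * ((q^2)⁻¹)^m)) * D₀^m := by
          rw [one_pow, show q^(2*m) = (q^2)^m from pow_mul q 2 m, div_eq_mul_inv, ← inv_pow]
          ring
        have hcor : C₀ * 1^J * ((m:ℝ)+2)^J * D₀^m / q^(2*m) ≤ (C₀*K1) * D₀^m := by
          rw [ecor]
          apply mul_le_mul_of_nonneg_right _ (by positivity)
          exact mul_le_mul_of_nonneg_left (hK1 m) (by linarith)
        have hGm : G m ≤ D₀^m := ih m (by omega)
        calc G (m+1) ≤ D₀^m + (C₀*K1)*D₀^m := by linarith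
          _ = (1 + C₀*K1) * D₀^m := by ring
          _ ≤ D₀ * D₀^m := mul_le_mul_of_nonneg_right hD₀C (by positivity)
          _ = D₀^(m+1) := by rw [pow_succ]; ring
  -- bootstrap step
  obtain ⟨K2, hK20, hK2⟩ := hK q⁻¹ (by positivity)
    (by rw [inv_lt_one₀ q0]; exact hq)
  have boot : ∀ A D E : ℝ, 1 ≤ A → 1 ≤ D → q ≤ E → D ≤ E * q → (∀ n, G n ≤ A * D^n) →
      ∃ A', 1 ≤ A' ∧ ∀ n, G n ≤ A' * E^n := by
    intro A D E hA hD hqE hDE hall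
    have hA0 : (0:ℝ) ≤ A := le_trans zero_le_one hA
    have hE1 : (1:ℝ) < E := lt_of_lt_of_le hq hqE
    have hE0 : (0:ℝ) < E - 1 := by linarith
    have perk : ∀ k : ℕ, C₀ * A^J * ((k:ℝ)+2)^J * D^k / q^(2*k) ≤ (C₀ * A^J * K2) * E^k := by
      intro k
      have e : C₀ * A^J * ((k:ℝ)+2)^J * D^k / q^(2*k)
          = (C₀ * A^J) * (((k:ℝ)+2)^J * (q⁻¹)^k) * (D/q)^k := by
        rw [two_mul, pow_add, div_pow, inv_pow]
        field_simp
        try ring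
      rw [e]
      have h2 : (D/q)^k ≤ E^k := by
        apply pow_le_pow_left₀ (by positivity) _ k
        rw [div_le_iff₀ q0]
        exact hDE
      have h1 : (C₀ * A^J) * (((k:ℝ)+2)^J * (q⁻¹)^k) ≤ C₀*A^J*K2 := by
        have h := mul_le_mul_of_nonneg_left (hK2 k) (show (0:ℝ) ≤ C₀ * A^J by positivity)
        calc (C₀ * A^J) * (((k:ℝ)+2)^J * (q⁻¹)^k) ≤ (C₀*A^J) * K2 := h
          _ = C₀*A^J*K2 := by ring
      exact mul_le_mul h1 h2 (by positivity) (by positivity)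
    refine ⟨1 + C₀*A^J*K2/(E-1), le_add_of_nonneg_right (by positivity), fun n => ?_⟩
    have htel := telesc A D hA hD hall n
    have hsum2 : (∑ k ∈ Finset.range n, C₀ * A^J * ((k:ℝ)+2)^J * D^k / q^(2*k))
        ≤ (C₀*A^J*K2) * (E^n / (E-1)) := by
      calc (∑ k ∈ Finset.range n, C₀ * A^J * ((k:ℝ)+2)^J * D^k / q^(2*k))
          ≤ ∑ k ∈ Finset.range n, (C₀*A^J*K2) * E^k := Finset.sum_le_sum (fun k _ => perk k)
        _ = (C₀*A^J*K2) * ∑ k ∈ Finset.range n, E^k := by rw [Finset.mul_sum]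
        _ ≤ (C₀*A^J*K2) * (E^n / (E-1)) := by
            apply mul_le_mul_of_nonneg_left _ (by positivity)
            rw [geom_sum_eq (ne_of_gt hE1)]
            gcongr
            linarith
    have h1 : (1:ℝ) ≤ E^n := one_le_pow₀ hE1.le
    have e2 : (C₀*A^J*K2) * (E^n/(E-1)) = (C₀*A^J*K2/(E-1)) * E^n := by ring
    have hc0 : (0:ℝ) ≤ C₀*A^J*K2/(E-1) := by positivity
    calc G n ≤ 1 + ∑ k ∈ Finset.range n, C₀ * A^J * ((k:ℝ)+2)^J * D^k / q^(2*k) := htel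
      _ ≤ 1 + (C₀*A^J*K2/(E-1)) * E^n := by rw [← e2]; linarith
      _ ≤ (1 + C₀*A^J*K2/(E-1)) * E^n := by nlinarith
  -- iterate the bootstrap
  have iter : ∀ t : ℕ, ∃ A', 1 ≤ A' ∧ ∀ n, G n ≤ A' * (max q (D₀ / q^t))^n := by
    intro t
    induction t with
    | zero =>
      refine ⟨1, le_rfl, fun n => ?_⟩
      rw [one_mul, pow_zero, div_one, max_eq_right hD₀q]
      exact claim1 n
    | succ t ih =>
      obtain ⟨A', hA', hGt⟩ := ih
      have hE'q : q ≤ max q (D₀ / q^(t+1)) := le_max_left _ _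
      have hDmax1 : 1 ≤ max q (D₀ / q^t) := le_trans q1 (le_max_left _ _)
      have hEq1 : (1:ℝ) ≤ max q (D₀ / q^(t+1)) := le_trans q1 hE'q
      apply boot A' (max q (D₀/q^t)) (max q (D₀/q^(t+1))) hA' hDmax1 hE'q _ hGt
      apply max_le
      · calc q = 1 * q := (one_mul q).symm
          _ ≤ max q (D₀/q^(t+1)) * q := mul_le_mul_of_nonneg_right hEq1 q0.le
      · have e : D₀ / q^t = (D₀ / q^(t+1)) * q := by
          rw [pow_succ]
          field_simp
        rw [e]
        exact mul_le_mul_of_nonneg_right (le_max_right _ _) q0.le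
  obtain ⟨t, ht⟩ := pow_unbounded_of_one_lt D₀ hq
  have hmax : max q (D₀/q^t) = q := max_eq_left (by
    rw [div_le_iff₀ (by positivity)]
    calc D₀ ≤ q^t := ht.le
      _ ≤ q * q^t := le_mul_of_one_le_left (by positivity) q1)
  obtain ⟨A, hA1, hAq'⟩ := iter t
  rw [hmax] at hAq'
  -- final: bounded
  have hsq : 1 < Real.sqrt q := by
    rw [show (1:ℝ) = Real.sqrt 1 by simp]
    exact Real.sqrt_lt_sqrt (by norm_num) hq
  have hsq0 : 0 < Real.sqrt q := lt_trans one_pos hsq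
  set s : ℝ := (Real.sqrt q)⁻¹ with hs
  have hs0 : 0 < s := by positivity
  have hs1 : s < 1 := by rw [hs, inv_lt_one₀ hsq0]; exact hsq
  have hss : s * s = q⁻¹ := by
    rw [hs, ← mul_inv, Real.mul_self_sqrt q0.le]
  obtain ⟨K3, hK30, hK3⟩ := hK s hs0 hs1
  have perk3 : ∀ k : ℕ, C₀ * A^J * ((k:ℝ)+2)^J * q^k / q^(2*k)
      ≤ (C₀*A^J*K3) * s^k := by
    intro k
    have e0 : C₀ * A^J * ((k:ℝ)+2)^J * q^k / q^(2*k)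
        = (C₀*A^J) * (((k:ℝ)+2)^J * s^k) * s^k := by
      have e1 : (q⁻¹ : ℝ)^k = s^k * s^k := by rw [← hss, mul_pow]
      rw [two_mul, pow_add]
      rw [show C₀ * A^J * ((k:ℝ)+2)^J * q^k / (q^k * q^k)
          = C₀ * A^J * ((k:ℝ)+2)^J * (q⁻¹)^k from by
        rw [inv_pow]
        field_simp]
      rw [e1]
      ring
    rw [e0]
    exact mul_le_mul_of_nonneg_right (mul_le_mul_of_nonneg_left (hK3 k) (by positivity))
      (by positivity)
  have h1s : (0:ℝ) < 1 - s := by linarith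
  have h1s' : (0:ℝ) ≤ (1-s)⁻¹ := inv_nonneg.mpr h1s.le
  have hgeo : ∀ n : ℕ, (∑ k ∈ Finset.range n, s^k) ≤ (1-s)⁻¹ := by
    intro n
    rw [geom_sum_eq (ne_of_lt hs1)]
    have e : (s^n - 1)/(s - 1) = (1 - s^n) * (1-s)⁻¹ := by
      have h1 : s - 1 ≠ 0 := by linarith
      have h2 : (1:ℝ) - s ≠ 0 := by linarith
      field_simp
      ring
    rw [e]
    have hsn : 0 ≤ s^n := by positivity
    have : (1 - s^n) ≤ 1 := by linarith
    calc (1 - s^n) * (1-s)⁻¹ ≤ 1 * (1-s)⁻¹ :=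
        mul_le_mul_of_nonneg_right this h1s'
      _ = (1-s)⁻¹ := one_mul _
  have hbG : ∀ n, G n ≤ 1 + (C₀*A^J*K3) * (1-s)⁻¹ := by
    intro n
    have htel := telesc A q hA1 q1 hAq' n
    have hsum3 : (∑ k ∈ Finset.range n, C₀ * A^J * ((k:ℝ)+2)^J * q^k / q^(2*k))
        ≤ (C₀*A^J*K3) * (1-s)⁻¹ := by
      calc (∑ k ∈ Finset.range n, C₀ * A^J * ((k:ℝ)+2)^J * q^k / q^(2*k))
          ≤ ∑ k ∈ Finset.range n, (C₀*A^J*K3) * s^k := by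
            apply Finset.sum_le_sum
            intro k _
            exact perk3 k
        _ = (C₀*A^J*K3) * ∑ k ∈ Finset.range n, s^k := by rw [Finset.mul_sum]
        _ ≤ (C₀*A^J*K3) * (1-s)⁻¹ :=
            mul_le_mul_of_nonneg_left (hgeo n) (by positivity)
    linarith
  have hbdd : BddAbove (Set.range G) := by
    refine ⟨1 + (C₀*A^J*K3) * (1-s)⁻¹, ?_⟩
    rintro x ⟨n, rfl⟩
    exact hbG n
  have htend : Tendsto G atTop (𝓝 (⨆ n, G n)) := tendsto_atTop_ciSup hmono hbdd
  refine ⟨⨆ n, G n, ?_, htend⟩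
  have h1 := le_ciSup hbdd 0
  rw [hG0] at h1
  linarith

/-- Drake's equation.  For q > 1 real and S₀ a finite set of integers each at
least 2, the solution of f(z) = 1 + qzf(z)f(q²z) + ∑_{j∈S₀} q^{j(j−1)} z^j
f(z)f(q²z)⋯f(q^{2(j−1)}z) satisfies f_n q^{−n²} → c for some constant c > 0. -/
theorem stmt17 (q : ℝ) (hq : 1 < q) (S₀ : Finset ℕ) (hS : ∀ j ∈ S₀, 2 ≤ j)
    (f : PowerSeries ℝ)
    (hf : f = 1 + PowerSeries.C q * PowerSeries.X *
            (f * PowerSeries.rescale (q ^ 2) f) +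
          ∑ j ∈ S₀, PowerSeries.C (q ^ (j * (j - 1))) * PowerSeries.X ^ j *
            ∏ i ∈ Finset.range j, PowerSeries.rescale (q ^ (2 * i)) f) :
    ∃ c : ℝ, 0 < c ∧
      Filter.Tendsto (fun n : ℕ => PowerSeries.coeff n f * q ^ (-((n : ℤ) ^ 2)))
        Filter.atTop (𝓝 c) := by
  have q0 : (0:ℝ) < q := lt_trans one_pos hq
  set J : ℕ := S₀.sup id + 2 with hJdef
  have hJ2 : 2 ≤ J := by omega
  have hJb : ∀ j ∈ S₀, j ≤ J := fun j hj => by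
    have : j ≤ S₀.sup id := Finset.le_sup (f := id) hj
    omega
  set C₀ : ℝ := ((S₀.card : ℝ) + 1) * q^J with hC₀def
  have hC₀ : 1 ≤ C₀ := by
    have h1 : (1:ℝ) ≤ q^J := one_le_pow₀ hq.le
    have h2 : (0:ℝ) ≤ (S₀.card : ℝ) := Nat.cast_nonneg _
    nlinarith
  have hup' : ∀ A D : ℝ, 1 ≤ A → 1 ≤ D → ∀ n : ℕ,
      (∀ k, k ≤ n → PowerSeries.coeff k f ≤ A * D^k * q^(k*k)) →
      PowerSeries.coeff (n+1) f ≤ PowerSeries.coeff n f * q^(2*n+1)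
        + C₀ * A^J * ((n:ℝ)+2)^J * D^n * q^(n*n+1) := by
    intro A D hA hD n hbd
    have h := up hq hS hf hJ2 hJb hA hD n hbd
    calc PowerSeries.coeff (n+1) f
        ≤ PowerSeries.coeff n f * q^(2*n+1)
          + ((S₀.card : ℝ) + 1) * (q^J * A^J * ((n:ℝ)+2)^J * D^n * q^(n*n+1)) := h
      _ = PowerSeries.coeff n f * q^(2*n+1)
          + C₀ * A^J * ((n:ℝ)+2)^J * D^n * q^(n*n+1) := by rw [hC₀def]; ring
  obtain ⟨c, hc, ht⟩ := seq_main hq hC₀ hJ2 (rec0 hS hf) (pos hq hS hf) (low hq hS hf) hup'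
  refine ⟨c, hc, ?_⟩
  have e : (fun n : ℕ => PowerSeries.coeff n f * q ^ (-((n : ℤ) ^ 2)))
      = fun n : ℕ => PowerSeries.coeff n f / q^(n*n) := by
    funext n
    have e1 : (-((n:ℤ)^2)) = -((n*n : ℕ) : ℤ) := by push_cast; ring
    rw [e1, zpow_neg, zpow_natCast, div_eq_mul_inv]
  rw [e]
  exact ht
end
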